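/- arXiv:1607.00658 — 11 statements merged into one kernel-verified Lean document; each statement's English description precedes it below -/
import Mathlib

section
/- For every negative integer c₁ and positive integer c₂, there exist connected graphs G₁, G₂ with non-cut edges e₁ ∈ E(G₁), e₂ ∈ E(G₂) such that Z_c(G₁) - Z_c(G₁ - e₁) < c₁ and Z_c(G₂) - Z_c(G₂ - e₂) > c₂. -/
/-- A vertex is (eventually) forced, starting from the initially colored set `S`,
under the zero forcing color change rule: a colored vertex all of whose other
neighbors are colored forces its remaining neighbor. -/
inductive SimpleGraph.Forced {V : Type*} (G : SimpleGraph V) (S : Set V) : V → Prop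
  | init (v : V) (hv : v ∈ S) : SimpleGraph.Forced G S v
  | force (u v : V) (hu : SimpleGraph.Forced G S u) (huv : G.Adj u v)
      (hrest : ∀ w, G.Adj u w → w ≠ v → SimpleGraph.Forced G S w) :
      SimpleGraph.Forced G S v

/-- `S` is a zero forcing set of `G`. -/
def SimpleGraph.IsZeroForcingSet {V : Type*} (G : SimpleGraph V) (S : Set V) : Prop :=
  ∀ v, G.Forced S v

/-- `S` is a connected zero forcing set of `G`. -/
def SimpleGraph.IsConnectedZFS {V : Type*} (G : SimpleGraph V) (S : Set V) : Prop :=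
  G.IsZeroForcingSet S ∧ (G.induce S).Connected

/-- The zero forcing number `Z(G)`. -/
noncomputable def SimpleGraph.zfNumber {V : Type*} (G : SimpleGraph V) : ℕ :=
  sInf {n | ∃ S : Set V, G.IsZeroForcingSet S ∧ S.ncard = n}

/-- The connected zero forcing number `Z_c(G)`. -/
noncomputable def SimpleGraph.czfNumber {V : Type*} (G : SimpleGraph V) : ℕ :=
  sInf {n | ∃ S : Set V, G.IsConnectedZFS S ∧ S.ncard = n}

/-- `P` is (the vertex set of) a connected component of `G − X`. -/
def SimpleGraph.IsCompOfDel {V : Type*} (G : SimpleGraph V) (X P : Set V) : Prop :=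
  P.Nonempty ∧ Disjoint P X ∧ (G.induce P).Connected ∧
    ∀ u ∈ P, ∀ w, G.Adj u w → w ∉ X → w ∈ P

/-- The induced subgraph `G[P]` is a path graph. -/
def SimpleGraph.IsPathGraphOn {V : Type*} (G : SimpleGraph V) (P : Set V) : Prop :=
  P.Nonempty ∧ (G.induce P).Connected ∧
    (∀ v ∈ P, (G.neighborSet v ∩ P).ncard ≤ 2) ∧
    ∃ v ∈ P, (G.neighborSet v ∩ P).ncard ≤ 1

/-- `P` is a pendant path attached to `v`: a path component of `G − v`,
one of whose ends (a base) is adjacent to `v`. -/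
def SimpleGraph.IsPendantPath {V : Type*} (G : SimpleGraph V) (v : V) (P : Set V) : Prop :=
  G.IsCompOfDel {v} P ∧ G.IsPathGraphOn P ∧
    ∃ b ∈ P, G.Adj v b ∧ (G.neighborSet b ∩ P).ncard ≤ 1

/-- `v` is a cut vertex of `G`. -/
def SimpleGraph.IsCutVertex {V : Type*} (G : SimpleGraph V) (v : V) : Prop :=
  ¬ (G.induce {v}ᶜ).Connected

/-- `G[B]` is connected and has no cut vertices. -/
def SimpleGraph.IsBiconnectedSet {V : Type*} (G : SimpleGraph V) (B : Set V) : Prop :=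
  (G.induce B).Connected ∧
    ∀ v ∈ B, (B \ {v}).Nonempty → (G.induce (B \ {v})).Connected

/-- `B` is (the vertex set of) a block of `G`: a maximal subgraph with no cut vertices. -/
def SimpleGraph.IsBlock {V : Type*} (G : SimpleGraph V) (B : Set V) : Prop :=
  G.IsBiconnectedSet B ∧ ∀ B', B ⊆ B' → G.IsBiconnectedSet B' → B' = B

/-- The induced subgraph `G[C]` is a cycle. -/
def SimpleGraph.IsCycleGraphOn {V : Type*} (G : SimpleGraph V) (C : Set V) : Prop :=
  3 ≤ C.ncard ∧ (G.induce C).Connected ∧ ∀ v ∈ C, (G.neighborSet v ∩ C).ncard = 2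

/-- `D` is a (possibly empty) segment of the cycle `G[C]`:
a proper set of consecutive vertices along the cycle. -/
def SimpleGraph.IsSegmentOf {V : Type*} (G : SimpleGraph V) (C D : Set V) : Prop :=
  D ⊆ C ∧ (D = ∅ ∨ ((G.induce D).Connected ∧ D ≠ C))

/-- The minimum degree of the induced subgraph `G[B]`. -/
noncomputable def SimpleGraph.minDegOn {V : Type*} (G : SimpleGraph V) (B : Set V) : ℕ :=
  sInf ((fun v => (G.neighborSet v ∩ B).ncard) '' B)

/-- `G − v` has at least three connected components. -/
def SimpleGraph.DelHasThreeComps {V : Type*} (G : SimpleGraph V) (v : V) : Prop :=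
  ∃ P₁ P₂ P₃ : Set V, G.IsCompOfDel {v} P₁ ∧ G.IsCompOfDel {v} P₂ ∧ G.IsCompOfDel {v} P₃ ∧
    Disjoint P₁ P₂ ∧ Disjoint P₁ P₃ ∧ Disjoint P₂ P₃

/-- `G − v` has exactly two connected components. -/
def SimpleGraph.DelHasTwoComps {V : Type*} (G : SimpleGraph V) (v : V) : Prop :=
  ∃ P₁ P₂ : Set V, G.IsCompOfDel {v} P₁ ∧ G.IsCompOfDel {v} P₂ ∧
    Disjoint P₁ P₂ ∧ P₁ ∪ P₂ = {v}ᶜ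



/-!
Twin vertices `a`, `b` (with `N(a) \ {b} = N(b) \ {a}`) can never be forced while both are
uncolored, so every zero forcing set meets every twin pair. If a path `x₀ ⋯ x_N` carries a twin
pair at each end, a connected zero forcing set contains a vertex of each pair and hence, being
connected, all of `x₁, …, x_{N-1}`: `Z_c ≥ N + 1`. One edge can break this:
* in the double broom (two leaves at each end of the path) `Z_c ≥ N + 1`, but joining a leaf at
  one end to a leaf at the other gives a connected zero forcing set of 5 vertices, which forces
  along the path; so the spread of that edge is at most `4 - N`;
* the path with a triangle at each end has `Z_c ≥ N + 1`, but deleting a triangle edge at `x₀`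
  leaves a tadpole, forced by its remaining triangle; so the spread is at least `N - 2`.
-/

namespace SimpleGraph

variable {V : Type*} {G : SimpleGraph V} {S : Set V}

def Twins (G : SimpleGraph V) (a b : V) : Prop :=
  a ≠ b ∧ ∀ w, w ≠ a → w ≠ b → (G.Adj a w ↔ G.Adj b w)

theorem IsZeroForcingSet.mem_or_mem_of_twins {a b : V} (hS : G.IsZeroForcingSet S)
    (hab : G.Twins a b) : a ∈ S ∨ b ∈ S := by
  by_contra! h
  suffices ∀ v, G.Forced S v → v ≠ a ∧ v ≠ b from (this a (hS a)).1 rfl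
  intro v hv
  induction hv with
  | init v hv => exact ⟨fun h' => h.1 (h' ▸ hv), fun h' => h.2 (h' ▸ hv)⟩
  | force u v _ huv _ ihu ihrest =>
    obtain ⟨hua, hub⟩ := ihu
    refine ⟨?_, ?_⟩ <;> rintro rfl
    · exact (ihrest b ((hab.2 u hua hub).1 huv.symm).symm hab.1.symm).2 rfl
    · exact (ihrest a ((hab.2 u hua hub).2 huv.symm).symm hab.1).1 rfl

/-- `t v` is the time at which `v` gets colored; `u` is the vertex that forces it. -/
theorem isZeroForcingSet_of_forcingTime (t : V → ℕ)
    (ht : ∀ v ∉ S, ∃ u, G.Adj u v ∧ t u < t v ∧ ∀ w, G.Adj u w → w ≠ v → t w < t v) :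
    G.IsZeroForcingSet S := by
  suffices ∀ n, ∀ v, t v = n → G.Forced S v from fun v => this _ v rfl
  intro n
  induction n using Nat.strong_induction_on with
  | _ n ih =>
    rintro v rfl
    by_cases hv : v ∈ S
    · exact .init v hv
    obtain ⟨u, huv, hut, hw⟩ := ht v hv
    exact .force u v (ih _ hut u rfl) huv fun w huw hwv => ih _ (hw w huw hwv) w rfl

theorem connected_of_descent (r : V) (d : V → ℕ)
    (hd : ∀ v ≠ r, ∃ w, G.Adj v w ∧ d w < d v) : G.Connected := by
  suffices ∀ n, ∀ v, d v = n → G.Reachable v r from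
    (connected_iff_exists_forall_reachable G).2 ⟨r, fun v => (this _ v rfl).symm⟩
  intro n
  induction n using Nat.strong_induction_on with
  | _ n ih =>
    rintro v rfl
    by_cases hv : v = r
    · exact hv ▸ .refl v
    obtain ⟨w, hvw, hwd⟩ := hd v hv
    exact hvw.reachable.trans (ih _ hwd w rfl)

theorem Walk.Icc_subset_image_support (f : V → ℕ) (hf : ∀ u v, G.Adj u v → f v ≤ f u + 1)
    {u v : V} (W : G.Walk u v) : Set.Icc (f u) (f v) ⊆ f '' {w | w ∈ W.support} := by
  induction W with
  | nil => intro i hi; exact ⟨_, Walk.start_mem_support _, by simp at hi; omega⟩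
  | @cons a b c hab W ih =>
    intro i ⟨hi₁, hi₂⟩
    by_cases hai : f a = i
    · exact ⟨a, by simp, hai⟩
    obtain ⟨w, hw, hwi⟩ := ih ⟨by have := hf a b hab; omega, hi₂⟩
    exact ⟨w, by simp_all, hwi⟩

theorem le_ncard_of_induce_connected [Finite V] (hS : (G.induce S).Connected) (f : V → ℕ)
    (hf : ∀ u v, G.Adj u v → f v ≤ f u + 1) {u v : V} (hu : u ∈ S) (hv : v ∈ S) :
    f v + 1 ≤ S.ncard + f u := by
  obtain ⟨W⟩ := hS.preconnected ⟨u, hu⟩ ⟨v, hv⟩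
  have hIcc : Set.Icc (f u) (f v) ⊆ f '' S := by
    have hW := Walk.Icc_subset_image_support (f ∘ Subtype.val) (fun a b hab => hf a.1 b.1 hab) W
    refine hW.trans ?_
    rintro _ ⟨w, -, rfl⟩
    exact ⟨w, w.2, rfl⟩
  have h₁ := Set.ncard_le_ncard hIcc ((Set.toFinite S).image f)
  have h₂ := Set.ncard_image_le (f := f) (Set.toFinite S)
  rw [Set.ncard_Icc_nat] at h₁
  omega

theorem czfNumber_le (hS : G.IsConnectedZFS S) : G.czfNumber ≤ S.ncard :=
  Nat.sInf_le ⟨S, hS, rfl⟩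

theorem czfNumber_le_of_walk {u v : V} (W : G.Walk u v)
    (hW : G.IsZeroForcingSet {w | w ∈ W.support}) : G.czfNumber ≤ W.length + 1 := by
  classical
  refine (czfNumber_le ⟨hW, W.connected_induce_support⟩).trans ?_
  rw [← W.length_support, ← List.coe_toFinset, Set.ncard_coe_finset]
  exact List.toFinset_card_le _

theorem le_czfNumber {n : ℕ} (hG : G.Connected) (h : ∀ S, G.IsConnectedZFS S → n ≤ S.ncard) :
    n ≤ G.czfNumber := by
  have : Nonempty V := hG.nonempty
  refine le_csInf ⟨_, Set.univ, ⟨fun v => .init v trivial, ?_⟩, rfl⟩ ?_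
  · exact (induceUnivIso G).connected_iff.2 hG
  · rintro _ ⟨S, hS, rfl⟩
    exact h S hS

theorem le_czfNumber_of_twins [Finite V] (hG : G.Connected) (f : V → ℕ)
    (hf : ∀ u v, G.Adj u v → f v ≤ f u + 1) {n : ℕ} {a₁ a₂ b₁ b₂ : V}
    (ha : G.Twins a₁ a₂) (hb : G.Twins b₁ b₂) (ha₁ : f a₁ = 0) (ha₂ : f a₂ = 0)
    (hb₁ : f b₁ = n) (hb₂ : f b₂ = n) : n + 1 ≤ G.czfNumber := by
  refine le_czfNumber hG fun S hS => ?_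
  obtain ⟨a, haS, hfa⟩ : ∃ a ∈ S, f a = 0 := by
    rcases hS.1.mem_or_mem_of_twins ha with h | h
    exacts [⟨a₁, h, ha₁⟩, ⟨a₂, h, ha₂⟩]
  obtain ⟨b, hbS, hfb⟩ : ∃ b ∈ S, f b = n := by
    rcases hS.1.mem_or_mem_of_twins hb with h | h
    exacts [⟨b₁, h, hb₁⟩, ⟨b₂, h, hb₂⟩]
  simpa [hfa, hfb] using le_ncard_of_induce_connected hS.2 f hf haS hbS

theorem deleteEdges_sup_edge {u v : V} (h : ¬G.Adj u v) :
    (G ⊔ edge u v).deleteEdges {s(u, v)} = G := by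
  simp [deleteEdges_eq_self, h]

theorem mem_edgeSet_sup_edge {u v : V} (h : u ≠ v) : s(u, v) ∈ (G ⊔ edge u v).edgeSet :=
  Or.inr ((edge_adj ..).2 ⟨Or.inl ⟨rfl, rfl⟩, h⟩)

end SimpleGraph

namespace ConnectedForcingSpread

open SimpleGraph

attribute [local grind =] comap_adj fromRel_adj

variable (N : ℕ)

-- Vertices `0, …, N` form the path; `N + 1`, `N + 2` hang at `0` and `N + 3`, `N + 4` at `N`.

def doubleBroom : SimpleGraph (Fin (N + 5)) := SimpleGraph.comap Fin.val <| fromRel fun a b =>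
  (a + 1 = b ∧ b ≤ N) ∨ (a = 0 ∧ (b = N + 1 ∨ b = N + 2)) ∨ (a = N ∧ (b = N + 3 ∨ b = N + 4))

def tadpole : SimpleGraph (Fin (N + 5)) := SimpleGraph.comap Fin.val <| fromRel fun a b =>
  (a + 1 = b ∧ b ≤ N) ∨ (a = 0 ∧ b = N + 1) ∨ (a = N + 1 ∧ b = N + 2) ∨
    (a = N ∧ (b = N + 3 ∨ b = N + 4)) ∨ (a = N + 3 ∧ b = N + 4)

def height (v : Fin (N + 5)) : ℕ :=
  if v.val ≤ N then v else if v.val ≤ N + 2 then 0 else N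

theorem doubleBroom_connected : (doubleBroom N).Connected := by
  refine connected_of_descent ⟨0, by omega⟩ Fin.val fun v hv => ?_
  replace hv : v.val ≠ 0 := fun h => hv (Fin.ext h)
  by_cases h : v.val ≤ N
  · exact ⟨⟨v.val - 1, by omega⟩, by grind [doubleBroom], by grind⟩
  by_cases h' : v.val ≤ N + 2
  · exact ⟨⟨0, by omega⟩, by grind [doubleBroom], by grind⟩
  · exact ⟨⟨N, by omega⟩, by grind [doubleBroom], by grind⟩

theorem tadpole_connected : (tadpole N).Connected := by
  refine connected_of_descent ⟨0, by omega⟩ Fin.val fun v hv => ?_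
  replace hv : v.val ≠ 0 := fun h => hv (Fin.ext h)
  by_cases h : v.val ≤ N ∨ v.val = N + 2
  · exact ⟨⟨v.val - 1, by omega⟩, by grind [tadpole], by grind⟩
  by_cases h' : v.val = N + 1
  · exact ⟨⟨0, by omega⟩, by grind [tadpole], by grind⟩
  · exact ⟨⟨N, by omega⟩, by grind [tadpole], by grind⟩

theorem height_doubleBroom (u v : Fin (N + 5)) (h : (doubleBroom N).Adj u v) :
    height N v ≤ height N u + 1 := by
  grind [doubleBroom, height]

theorem height_tadpole_sup_edge (u v : Fin (N + 5))
    (h : (tadpole N ⊔ edge ⟨0, by omega⟩ ⟨N + 2, by omega⟩).Adj u v) :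
    height N v ≤ height N u + 1 := by
  simp only [tadpole, sup_adj, edge_adj, comap_adj, fromRel_adj, Fin.ext_iff, height] at *
  split_ifs <;> omega

theorem doubleBroom_twins_left : (doubleBroom N).Twins ⟨N + 1, by omega⟩ ⟨N + 2, by omega⟩ :=
  ⟨by simp [Fin.ext_iff], fun w h1 h2 => by grind [doubleBroom, Fin.ext_iff]⟩

theorem doubleBroom_twins_right : (doubleBroom N).Twins ⟨N + 3, by omega⟩ ⟨N + 4, by omega⟩ :=
  ⟨by simp [Fin.ext_iff], fun w h1 h2 => by grind [doubleBroom, Fin.ext_iff]⟩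

theorem tadpole_sup_edge_twins_left :
    (tadpole N ⊔ edge ⟨0, by omega⟩ ⟨N + 2, by omega⟩).Twins ⟨N + 1, by omega⟩ ⟨N + 2, by omega⟩ :=
  ⟨by simp [Fin.ext_iff], fun w h1 h2 => by grind [tadpole, Fin.ext_iff]⟩

theorem tadpole_sup_edge_twins_right :
    (tadpole N ⊔ edge ⟨0, by omega⟩ ⟨N + 2, by omega⟩).Twins ⟨N + 3, by omega⟩ ⟨N + 4, by omega⟩ :=
  ⟨by simp [Fin.ext_iff], fun w h1 h2 => by grind [tadpole, Fin.ext_iff]⟩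

theorem doubleBroom_not_adj : ¬(doubleBroom N).Adj ⟨N + 1, by omega⟩ ⟨N + 3, by omega⟩ := by
  grind [doubleBroom]

theorem tadpole_not_adj : ¬(tadpole N).Adj ⟨0, by omega⟩ ⟨N + 2, by omega⟩ := by
  grind [tadpole]

theorem le_czfNumber_doubleBroom : N + 1 ≤ (doubleBroom N).czfNumber :=
  le_czfNumber_of_twins (doubleBroom_connected N) (height N) (height_doubleBroom N)
    (doubleBroom_twins_left N) (doubleBroom_twins_right N) (by simp [height]) (by simp [height])
    (by simp [height]) (by simp [height])

theorem le_czfNumber_tadpole_sup_edge :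
    N + 1 ≤ (tadpole N ⊔ edge ⟨0, by omega⟩ ⟨N + 2, by omega⟩).czfNumber :=
  le_czfNumber_of_twins ((tadpole_connected N).mono le_sup_left) (height N)
    (height_tadpole_sup_edge N) (tadpole_sup_edge_twins_left N) (tadpole_sup_edge_twins_right N)
    (by simp [height]) (by simp [height]) (by simp [height]) (by simp [height])

theorem czfNumber_doubleBroom_sup_edge_le :
    (doubleBroom N ⊔ edge ⟨N + 1, by omega⟩ ⟨N + 3, by omega⟩).czfNumber ≤ 5 := by
  set G := doubleBroom N ⊔ edge ⟨N + 1, by omega⟩ ⟨N + 3, by omega⟩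
  have h₁ : G.Adj ⟨N + 2, by omega⟩ ⟨0, by omega⟩ := by grind [doubleBroom]
  have h₂ : G.Adj ⟨0, by omega⟩ ⟨N + 1, by omega⟩ := by grind [doubleBroom]
  have h₃ : G.Adj ⟨N + 1, by omega⟩ ⟨N + 3, by omega⟩ := by grind [Fin.ext_iff]
  have h₄ : G.Adj ⟨N + 3, by omega⟩ ⟨N, by omega⟩ := by grind [doubleBroom]
  refine czfNumber_le_of_walk (.cons h₁ <| .cons h₂ <| .cons h₃ <| .cons h₄ .nil)
    (isZeroForcingSet_of_forcingTime
      (fun v => if v.val ≤ N ∨ v.val = N + 4 then v.val else 0) fun v hv => ?_)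
  simp only [Walk.support_cons, Walk.support_nil, List.mem_cons, Set.mem_ofPred_eq,
    Fin.ext_iff] at hv
  by_cases h : v.val < N
  · refine ⟨⟨v.val - 1, by omega⟩, by grind [doubleBroom], by grind, ?_⟩
    grind [doubleBroom, Fin.ext_iff]
  · refine ⟨⟨N, by omega⟩, by grind [doubleBroom], by grind, ?_⟩
    grind [doubleBroom, Fin.ext_iff]

theorem czfNumber_tadpole_le : (tadpole N).czfNumber ≤ 3 := by
  have h₁ : (tadpole N).Adj ⟨N + 3, by omega⟩ ⟨N, by omega⟩ := by grind [tadpole]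
  have h₂ : (tadpole N).Adj ⟨N, by omega⟩ ⟨N + 4, by omega⟩ := by grind [tadpole]
  refine czfNumber_le_of_walk (.cons h₁ <| .cons h₂ .nil) (isZeroForcingSet_of_forcingTime
      (fun v => if v.val ≤ N then N - v.val else if v.val ≤ N + 2 then v.val else 0)
      fun v hv => ?_)
  simp only [Walk.support_cons, Walk.support_nil, List.mem_cons, Set.mem_ofPred_eq,
    Fin.ext_iff] at hv
  by_cases h : v.val < N
  · refine ⟨⟨v.val + 1, by omega⟩, by grind [tadpole], by grind, ?_⟩
    grind [tadpole, Fin.ext_iff]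
  by_cases h' : v.val = N + 1
  · refine ⟨⟨0, by omega⟩, by grind [tadpole], by grind, ?_⟩
    grind [tadpole, Fin.ext_iff]
  · refine ⟨⟨N + 1, by omega⟩, by grind [tadpole], by grind, ?_⟩
    grind [tadpole, Fin.ext_iff]

end ConnectedForcingSpread

open SimpleGraph ConnectedForcingSpread in
theorem stmt0_general (c₁ c₂ : ℤ) :
    (∃ (V₁ : Type) (_ : Fintype V₁) (G₁ : SimpleGraph V₁) (e₁ : Sym2 V₁),
      G₁.Connected ∧ e₁ ∈ G₁.edgeSet ∧ (G₁.deleteEdges {e₁}).Connected ∧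
      (G₁.czfNumber : ℤ) - ((G₁.deleteEdges {e₁}).czfNumber : ℤ) < c₁) ∧
    (∃ (V₂ : Type) (_ : Fintype V₂) (G₂ : SimpleGraph V₂) (e₂ : Sym2 V₂),
      G₂.Connected ∧ e₂ ∈ G₂.edgeSet ∧ (G₂.deleteEdges {e₂}).Connected ∧
      (G₂.czfNumber : ℤ) - ((G₂.deleteEdges {e₂}).czfNumber : ℤ) > c₂) := by
  constructor
  · set N := c₁.natAbs + 5
    refine ⟨Fin (N + 5), inferInstance, doubleBroom N ⊔ edge ⟨N + 1, by omega⟩ ⟨N + 3, by omega⟩,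
      s(⟨N + 1, by omega⟩, ⟨N + 3, by omega⟩), ?_⟩
    rw [deleteEdges_sup_edge (doubleBroom_not_adj N)]
    have := czfNumber_doubleBroom_sup_edge_le N
    have := le_czfNumber_doubleBroom N
    exact ⟨(doubleBroom_connected N).mono le_sup_left, mem_edgeSet_sup_edge (by simp),
      doubleBroom_connected N, by omega⟩
  · set N := c₂.toNat + 3
    refine ⟨Fin (N + 5), inferInstance, tadpole N ⊔ edge ⟨0, by omega⟩ ⟨N + 2, by omega⟩,
      s(⟨0, by omega⟩, ⟨N + 2, by omega⟩), ?_⟩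
    rw [deleteEdges_sup_edge (tadpole_not_adj N)]
    have := le_czfNumber_tadpole_sup_edge N
    have := czfNumber_tadpole_le N
    exact ⟨(tadpole_connected N).mono le_sup_left, mem_edgeSet_sup_edge (by simp),
      tadpole_connected N, by omega⟩

/-- The connected forcing spread of a (non-cut) edge can be arbitrarily negative
and arbitrarily positive. -/
theorem stmt0 (c₁ c₂ : ℤ) (hc₁ : c₁ < 0) (hc₂ : 0 < c₂) :
    (∃ (V₁ : Type) (_ : Fintype V₁) (G₁ : SimpleGraph V₁) (e₁ : Sym2 V₁),
      G₁.Connected ∧ e₁ ∈ G₁.edgeSet ∧ (G₁.deleteEdges {e₁}).Connected ∧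
      (G₁.czfNumber : ℤ) - ((G₁.deleteEdges {e₁}).czfNumber : ℤ) < c₁) ∧
    (∃ (V₂ : Type) (_ : Fintype V₂) (G₂ : SimpleGraph V₂) (e₂ : Sym2 V₂),
      G₂.Connected ∧ e₂ ∈ G₂.edgeSet ∧ (G₂.deleteEdges {e₂}).Connected ∧
      (G₂.czfNumber : ℤ) - ((G₂.deleteEdges {e₂}).czfNumber : ℤ) > c₂) :=
  stmt0_general c₁ c₂
end

section
/- If G = (V,E) is a connected graph with |E| = Ω(|V|²), then Z_c(G) = Θ(|V|). Concretely: for every constant c > 0 there is c' > 0 such that every connected graph G with |E| ≥ c·|V|² satisfies Z_c(G) ≥ c'·|V|. -/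
/-!
Run the forcing process from a zero forcing set `S` with `|S| = k`, keeping track of the colored
set `T` and of the set `F ⊆ T` of vertices that have already forced. Each force adds one vertex
to each of `T` and `F`, so `|T \ F| = k` throughout. A newly colored vertex `x` has no neighbor
in `F` (every neighbor of a vertex of `F` is colored), so it brings at most `k` new edges inside
`T`. Hence `|E| ≤ k² + k (n - k) = k n`, and `c n² ≤ |E|` forces `k ≥ c n`.
-/

open Finset

theorem Finset.card_sym2_le_mul_self {α : Type*} [DecidableEq α] (s : Finset α) :
    #s.sym2 ≤ #s * #s := by
  rw [sym2_eq_image, ← card_product]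
  exact card_image_le

namespace SimpleGraph

variable {V : Type*} {G : SimpleGraph V}

theorem Forced.mono {S S' : Set V} (h : S ⊆ S') {v : V} (hv : G.Forced S v) : G.Forced S' v := by
  induction hv with
  | init v hv => exact .init v (h hv)
  | force u v _ huv _ ihu ihrest => exact .force u v ihu huv ihrest

theorem Forced.exists_force {T : Set V} {v : V} (hv : G.Forced T v) (hvT : v ∉ T) :
    ∃ u ∈ T, ∃ x ∉ T, G.Adj u x ∧ ∀ w, G.Adj u w → w ≠ x → w ∈ T := by
  induction hv with
  | init v hv => exact absurd hv hvT
  | force u v _ huv _ ihu ihrest =>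
    by_contra hno
    have hu : u ∈ T := by_contra fun h => hno (ihu h)
    exact hno ⟨u, hu, v, hvT, huv, fun w hw hwv => by_contra fun h => hno (ihrest w hw hwv h)⟩

section Counting

variable [Fintype V] [DecidableEq V] [DecidableRel G.Adj]

theorem card_edgeFinset_inter_sym2_insert_le (x : V) (T : Finset V) :
    #(G.edgeFinset ∩ (insert x T).sym2) ≤ #(G.edgeFinset ∩ T.sym2) + #{z ∈ T | G.Adj x z} := by
  have hsub : G.edgeFinset ∩ (insert x T).sym2 ⊆
      (G.edgeFinset ∩ T.sym2) ∪ {z ∈ T | G.Adj x z}.image (fun z => s(x, z)) := by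
    intro e he
    rw [mem_inter, sym2_insert, mem_union] at he
    obtain ⟨hE, he | he⟩ := he
    · obtain ⟨z, hz, rfl⟩ := mem_image.1 he
      have hxz : G.Adj x z := by simpa using hE
      have hzT : z ∈ T := (mem_insert.1 hz).resolve_left (G.ne_of_adj hxz).symm
      exact mem_union_right _ (mem_image_of_mem _ (mem_filter.2 ⟨hzT, hxz⟩))
    · exact mem_union_left _ (mem_inter.2 ⟨hE, he⟩)
  exact (card_le_card hsub).trans ((card_union_le _ _).trans (Nat.add_le_add_left card_image_le _))

theorem card_edgeFinset_add_le_of_forced {T F : Finset V} (hFT : F ⊆ T)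
    (hF : ∀ u ∈ F, ∀ w, G.Adj u w → w ∈ T) (hT : G.IsZeroForcingSet T) :
    #G.edgeFinset + #(T \ F) * #T ≤
      #(G.edgeFinset ∩ T.sym2) + #(T \ F) * Fintype.card V := by
  by_cases hTuniv : ∀ v, v ∈ T
  · rw [eq_univ_iff_forall.2 hTuniv, sym2_univ, inter_univ, card_univ]
  obtain ⟨v, hv⟩ := not_forall.1 hTuniv
  obtain ⟨u, huT, x, hxT, hux, hu⟩ := (hT v).exists_force (by simpa using hv)
  have huT : u ∈ T := by simpa using huT
  have hxT : x ∉ T := by simpa using hxT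
  have huF : u ∉ F := fun h => hxT (hF u h x hux)
  have hTcard : #T < Fintype.card V := card_lt_univ_of_notMem hxT
  have hFT' : insert u F ⊆ insert x T :=
    insert_subset (mem_insert_of_mem huT) (hFT.trans (subset_insert _ _))
  have ih := card_edgeFinset_add_le_of_forced (T := insert x T) (F := insert u F) hFT'
    (by
      intro z hz w hw
      rcases mem_insert.1 hz with rfl | hz
      · by_cases hwx : w = x
        · exact hwx ▸ mem_insert_self _ _
        · exact mem_insert_of_mem (by simpa using hu w hw hwx)
      · exact mem_insert_of_mem (hF z hz w hw))
    (fun w => (hT w).mono (by simp))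
  have hsdiff : #(insert x T \ insert u F) = #(T \ F) := by
    have := card_le_card hFT
    rw [card_sdiff_of_subset hFT', card_sdiff_of_subset hFT,
      card_insert_of_notMem hxT, card_insert_of_notMem huF]
    omega
  have hnbr : #{z ∈ T | G.Adj x z} ≤ #(T \ F) := by
    refine card_le_card fun z hz => ?_
    obtain ⟨hzT, hxz⟩ := mem_filter.1 hz
    exact mem_sdiff.2 ⟨hzT, fun hzF => hxT (hF z hzF x hxz.symm)⟩
  have hnew := card_edgeFinset_inter_sym2_insert_le (G := G) x T
  rw [hsdiff, card_insert_of_notMem hxT, mul_add_one] at ih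
  omega
termination_by Fintype.card V - #T
decreasing_by
  rw [card_insert_of_notMem hxT]
  omega

end Counting

theorem IsZeroForcingSet.ncard_edgeSet_le [Fintype V] {S : Set V} (hS : G.IsZeroForcingSet S) :
    G.edgeSet.ncard ≤ S.ncard * Fintype.card V := by
  classical
  have h := card_edgeFinset_add_le_of_forced (G := G) (T := S.toFinset) (F := ∅)
    (empty_subset _) (by simp) (by rwa [Set.coe_toFinset])
  have hS2 := (card_le_card (inter_subset_right (s₁ := G.edgeFinset))).trans
    (card_sym2_le_mul_self S.toFinset)
  rw [sdiff_empty] at h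
  rw [← coe_edgeFinset, Set.ncard_coe_finset, Set.ncard_eq_toFinset_card']
  omega

theorem Connected.exists_isConnectedZFS_ncard_eq_czfNumber (hG : G.Connected) :
    ∃ S : Set V, G.IsConnectedZFS S ∧ S.ncard = G.czfNumber := by
  have huniv : G.IsConnectedZFS Set.univ :=
    ⟨fun v => .init v (Set.mem_univ v), G.induceUnivIso.connected_iff.2 hG⟩
  exact Nat.sInf_mem (s := {n | ∃ S : Set V, G.IsConnectedZFS S ∧ S.ncard = n}) ⟨_, _, huniv, rfl⟩

theorem Connected.ncard_edgeSet_le_czfNumber_mul [Fintype V] (hG : G.Connected) :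
    G.edgeSet.ncard ≤ G.czfNumber * Fintype.card V := by
  obtain ⟨S, hS, hcard⟩ := hG.exists_isConnectedZFS_ncard_eq_czfNumber
  exact hcard ▸ hS.1.ncard_edgeSet_le

end SimpleGraph

/-- A connected graph with `Ω(n²)` edges has connected forcing number `Ω(n)`
(hence `Θ(n)`). -/
theorem stmt2 (c : ℝ) (hc : 0 < c) :
    ∃ c' : ℝ, 0 < c' ∧ ∀ (V : Type) [Fintype V] (G : SimpleGraph V),
      G.Connected →
      c * (Fintype.card V : ℝ) ^ 2 ≤ (G.edgeSet.ncard : ℝ) →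
      c' * (Fintype.card V : ℝ) ≤ (G.czfNumber : ℝ) := by
  refine ⟨c, hc, fun V _ G hG hedge => ?_⟩
  have hn : (0 : ℝ) < Fintype.card V := Nat.cast_pos.2 (Fintype.card_pos_iff.2 hG.nonempty)
  have hbound : (G.edgeSet.ncard : ℝ) ≤ G.czfNumber * Fintype.card V := by
    exact_mod_cast hG.ncard_edgeSet_le_czfNumber_mul
  refine le_of_mul_le_mul_right ?_ hn
  calc c * Fintype.card V * Fintype.card V = c * (Fintype.card V : ℝ) ^ 2 := by ring
    _ ≤ G.edgeSet.ncard := hedge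
    _ ≤ G.czfNumber * Fintype.card V := hbound
end

section
/- Let G be a connected graph, S a separating vertex set of G, and V₁,…,V_k the vertex sets of the connected components of G − S, where each vertex of S has a neighbor in each V_i. Then every connected zero forcing set of G contains a vertex from at least k−1 of the sets V₁,…,V_k. -/
/-!
A vertex of `S` has neighbours in every component, so it never has a unique uncoloured
neighbour while two components are still entirely uncoloured; a vertex inside a component
only sees that component and `S`. Hence, starting from a set that misses two components,
no force ever colours a vertex of either of them.
-/

namespace SimpleGraph

variable {V : Type*} {G : SimpleGraph V} {X A B R : Set V} {u v : V}

lemma IsCompOfDel.mem_of_adj (hA : G.IsCompOfDel X A) (hv : v ∈ A) (huv : G.Adj u v)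
    (hu : u ∉ X) : u ∈ A :=
  hA.2.2.2 v hv u huv.symm hu

lemma IsCompOfDel.exists_adj_ne_of_adj (hA : G.IsCompOfDel X A) (hAB : Disjoint A B)
    (hXB : ∀ x ∈ X, ∃ b ∈ B, G.Adj x b) (hv : v ∈ A) (hu : u ∉ A) (huv : G.Adj u v) :
    ∃ w ∈ B, G.Adj u w ∧ w ≠ v := by
  have huX : u ∈ X := by
    by_contra huX
    exact hu (hA.mem_of_adj hv huv huX)
  obtain ⟨w, hwB, huw⟩ := hXB u huX
  exact ⟨w, hwB, huw, fun hwv => Set.disjoint_left.mp hAB hv (hwv ▸ hwB)⟩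

theorem Forced.notMem_union_of_isCompOfDel (hA : G.IsCompOfDel X A) (hB : G.IsCompOfDel X B)
    (hAB : Disjoint A B) (hXA : ∀ x ∈ X, ∃ a ∈ A, G.Adj x a)
    (hXB : ∀ x ∈ X, ∃ b ∈ B, G.Adj x b) (hR : Disjoint R (A ∪ B)) (hv : G.Forced R v) :
    v ∉ A ∪ B := by
  induction hv with
  | init v hvR => exact Set.disjoint_left.mp hR hvR
  | force u v _ huv _ ihu ihrest =>
    have huA : u ∉ A := fun h => ihu (Or.inl h)
    have huB : u ∉ B := fun h => ihu (Or.inr h)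
    rintro (hvA | hvB)
    · obtain ⟨w, hwB, huw, hwv⟩ := hA.exists_adj_ne_of_adj hAB hXB hvA huA huv
      exact ihrest w huw hwv (Or.inr hwB)
    · obtain ⟨w, hwA, huw, hwv⟩ := hB.exists_adj_ne_of_adj hAB.symm hXA hvB huB huv
      exact ihrest w huw hwv (Or.inl hwA)

end SimpleGraph

theorem stmt3_general {V : Type} (G : SimpleGraph V)
    (S : Set V) (k : ℕ) (C : Fin k → Set V)
    (hcomp : ∀ i, G.IsCompOfDel S (C i))
    (hdisj : ∀ i j, i ≠ j → Disjoint (C i) (C j))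
    (hinc : ∀ s ∈ S, ∀ i, ∃ u ∈ C i, G.Adj s u) :
    ∀ R : Set V, G.IsConnectedZFS R →
      ∀ i j, C i ∩ R = ∅ → C j ∩ R = ∅ → i = j := by
  intro R hR i j hi hj
  by_contra hij
  have hRij : Disjoint R (C i ∪ C j) :=
    (Set.disjoint_iff_inter_eq_empty.mpr hi).symm.union_right
      (Set.disjoint_iff_inter_eq_empty.mpr hj).symm
  obtain ⟨v, hv⟩ := (hcomp i).1
  exact (hR.1 v).notMem_union_of_isCompOfDel (hcomp i) (hcomp j) (hdisj i j hij)
    (fun s hs => hinc s hs i) (fun s hs => hinc s hs j) hRij (Or.inl hv)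

/-- If `S` is a separating set each of whose vertices has a neighbor in each
component of `G − S`, then a connected forcing set meets at least `k − 1`
of the `k` components. -/
theorem stmt3 {V : Type} [Fintype V] (G : SimpleGraph V) (hG : G.Connected)
    (S : Set V) (hS : S.Nonempty) (k : ℕ) (hk : 2 ≤ k) (C : Fin k → Set V)
    (hcomp : ∀ i, G.IsCompOfDel S (C i))
    (hdisj : ∀ i j, i ≠ j → Disjoint (C i) (C j))
    (hcover : (⋃ i, C i) = Sᶜ)
    (hinc : ∀ s ∈ S, ∀ i, ∃ u ∈ C i, G.Adj s u) :
    ∀ R : Set V, G.IsConnectedZFS R →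
      ∀ i j, C i ∩ R = ∅ → C j ∩ R = ∅ → i = j :=
  stmt3_general G S k C hcomp hdisj hinc
end

section
/- Let G be a connected graph, S a separating vertex set, and V₁,…,V_k (k ≥ 3) the components of G − S, where each vertex of S has a neighbor in each component. Then every connected zero forcing set of G contains a vertex of S. -/
theorem Fin.exists_ne_ne_of_three_le {k : ℕ} (hk : 3 ≤ k) (i : Fin k) :
    ∃ j j' : Fin k, j ≠ j' ∧ j ≠ i ∧ j' ≠ i := by
  have hcard : 1 < ({i}ᶜ : Finset (Fin k)).card := by
    rw [Finset.card_compl, Fintype.card_fin, Finset.card_singleton]; omega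
  obtain ⟨j, hj, j', hj', hjj'⟩ := Finset.one_lt_card.mp hcard
  exact ⟨j, j', hjj', by simpa using hj, by simpa using hj'⟩

namespace SimpleGraph

variable {V : Type*} (G : SimpleGraph V)

def IsForcingClosed (A : Set V) : Prop :=
  ∀ u ∈ A, ∀ v, G.Adj u v → (∀ w, G.Adj u w → w ≠ v → w ∈ A) → v ∈ A

variable {G}

theorem Forced.mem_of_isForcingClosed {R A : Set V} (hA : G.IsForcingClosed A) (hRA : R ⊆ A)
    {v : V} (hv : G.Forced R v) : v ∈ A := by
  induction hv with
  | init v hv => exact hRA hv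
  | force u v _ huv _ hu hrest => exact hA u hu v huv hrest

theorem isForcingClosed_of_forall {A : Set V}
    (h : ∀ u ∈ A, (∀ w, G.Adj u w → w ∈ A) ∨
      ∃ y y', y ≠ y' ∧ G.Adj u y ∧ G.Adj u y' ∧ y ∉ A ∧ y' ∉ A) :
    G.IsForcingClosed A := by
  intro u hu v huv hrest
  rcases h u hu with hall | ⟨y, y', hyy', huy, huy', hy, hy'⟩
  · exact hall v huv
  · by_cases hyv : y = v
    · exact absurd (hrest y' huy' fun h => hyy' (hyv.trans h.symm)) hy'
    · exact absurd (hrest y huy hyv) hy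

theorem IsCompOfDel.subset_of_connected {X P R : Set V} (hP : G.IsCompOfDel X P)
    (hR : (G.induce R).Connected) (hRX : Disjoint R X) {r : V} (hrR : r ∈ R) (hrP : r ∈ P) :
    R ⊆ P := by
  have walk_mem : ∀ (a b : R) (_ : (G.induce R).Walk a b), (a : V) ∈ P → (b : V) ∈ P := by
    intro a b w
    induction w with
    | nil => exact id
    | cons hab _ ih =>
      exact fun ha => ih (hP.2.2.2 _ ha _ hab (hRX.notMem_of_mem_left (Subtype.coe_prop _)))
  intro x hx
  exact walk_mem ⟨r, hrR⟩ ⟨x, hx⟩ (hR.preconnected _ _).some hrP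

theorem IsCompOfDel.isForcingClosed_union {X P : Set V} (hP : G.IsCompOfDel X P)
    (hX : ∀ x ∈ X, ∃ Q Q', G.IsCompOfDel X Q ∧ G.IsCompOfDel X Q' ∧ Disjoint Q Q' ∧
      Disjoint Q P ∧ Disjoint Q' P ∧ (∃ y ∈ Q, G.Adj x y) ∧ ∃ y' ∈ Q', G.Adj x y') :
    G.IsForcingClosed (P ∪ X) := by
  refine isForcingClosed_of_forall fun u hu => ?_
  rcases hu with huP | huX
  · exact Or.inl fun w huw => or_iff_not_imp_right.mpr (hP.2.2.2 u huP w huw)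
  · obtain ⟨Q, Q', hQ, hQ', hQQ', hQP, hQ'P, ⟨y, hy, huy⟩, y', hy', huy'⟩ := hX u huX
    have not_mem {Q : Set V} (hQ : G.IsCompOfDel X Q) (hQP : Disjoint Q P) {z : V} (hz : z ∈ Q) :
        z ∉ P ∪ X := fun h => h.elim (hQP.notMem_of_mem_left hz) (hQ.2.1.notMem_of_mem_left hz)
    exact Or.inr ⟨y, y', hQQ'.ne_of_mem hy hy', huy, huy', not_mem hQ hQP hy, not_mem hQ' hQ'P hy'⟩

end SimpleGraph

theorem stmt4_general {V : Type} (G : SimpleGraph V)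
    (S : Set V) (k : ℕ) (hk : 3 ≤ k) (C : Fin k → Set V)
    (hcomp : ∀ i, G.IsCompOfDel S (C i))
    (hdisj : ∀ i j, i ≠ j → Disjoint (C i) (C j))
    (hcover : (⋃ i, C i) = Sᶜ)
    (hinc : ∀ s ∈ S, ∀ i, ∃ u ∈ C i, G.Adj s u) :
    ∀ R : Set V, G.IsConnectedZFS R → (S ∩ R).Nonempty := by
  rintro R ⟨hzfs, hconn⟩
  by_contra hSR
  have hRS : Disjoint R S := Set.disjoint_left.mpr fun x hxR hxS => hSR ⟨x, hxS, hxR⟩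
  obtain ⟨r, hr⟩ := hconn.nonempty
  obtain ⟨i, hri⟩ := Set.mem_iUnion.mp (hcover ▸ hRS.notMem_of_mem_left hr : r ∈ ⋃ i, C i)
  have hRC : R ⊆ C i := (hcomp i).subset_of_connected hconn hRS hr hri
  obtain ⟨j, j', hjj', hji, hj'i⟩ := Fin.exists_ne_ne_of_three_le hk i
  have hclosed : G.IsForcingClosed (C i ∪ S) := (hcomp i).isForcingClosed_union fun s hs =>
    ⟨C j, C j', hcomp j, hcomp j', hdisj j j' hjj', hdisj j i hji, hdisj j' i hj'i,
      hinc s hs j, hinc s hs j'⟩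
  obtain ⟨y, hy⟩ := (hcomp j).1
  rcases (hzfs y).mem_of_isForcingClosed hclosed (hRC.trans Set.subset_union_left) with hyC | hyS
  · exact (hdisj j i hji).ne_of_mem hy hyC rfl
  · exact (hcomp j).2.1.ne_of_mem hy hyS rfl

/-- If `S` is a separating set with `k ≥ 3` components, each vertex of `S` having a
neighbor in each component, then every connected forcing set contains a vertex of `S`. -/
theorem stmt4 {V : Type} [Fintype V] (G : SimpleGraph V) (hG : G.Connected)
    (S : Set V) (hS : S.Nonempty) (k : ℕ) (hk : 3 ≤ k) (C : Fin k → Set V)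
    (hcomp : ∀ i, G.IsCompOfDel S (C i))
    (hdisj : ∀ i j, i ≠ j → Disjoint (C i) (C j))
    (hcover : (⋃ i, C i) = Sᶜ)
    (hinc : ∀ s ∈ S, ∀ i, ∃ u ∈ C i, G.Adj s u) :
    ∀ R : Set V, G.IsConnectedZFS R → (S ∩ R).Nonempty :=
  stmt4_general G S k hk C hcomp hdisj hcover hinc
end

section
/- Let G be a connected graph, S a separating vertex set with exactly two components G[V₁], G[V₂] of G − S, where each vertex of S has a neighbor in both V₁ and V₂, and suppose Z(G[V₁]) > |S| and Z(G[V₂]) > |S|. Then every connected zero forcing set of G contains a vertex of S. -/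
/-!
A connected forcing set `R` avoiding `S` lies, by connectivity, inside one side, say `V₁`.
Follow the forces of `R` in chronological order: a vertex of `V₂` is forced either by a vertex
of `S` or by a vertex of `V₂`, whose other neighbours then lie in `V₂ ∪ S`. Hence the vertices of
`V₂` forced from `S` form a zero forcing set of `G[V₂]`, and since a vertex forces at most once
there are at most `|S|` of them, contradicting `Z(G[V₂]) > |S|`.
-/

open Filter

namespace SimpleGraph

variable {V : Type*} (G : SimpleGraph V)

def forceStep (X : Set V) : Set V :=
  X ∪ {v | ∃ u ∈ X, G.Adj u v ∧ ∀ w, G.Adj u w → w ≠ v → w ∈ X}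

lemma monotone_iterate_forceStep (R : Set V) : Monotone fun n => G.forceStep^[n] R :=
  monotone_nat_of_le_succ fun n => by
    rw [Function.iterate_succ_apply']
    exact Set.subset_union_left

variable {G}

lemma Forced.eventually_mem_iterate_forceStep [Finite V] {R : Set V} {v : V}
    (h : G.Forced R v) : ∀ᶠ n in atTop, v ∈ G.forceStep^[n] R := by
  induction h with
  | init v hv =>
    exact Eventually.of_forall fun n => G.monotone_iterate_forceStep R n.zero_le hv
  | force u v _ huv _ ihu ihw =>
    have hrest : ∀ᶠ n in atTop, ∀ w, G.Adj u w → w ≠ v → w ∈ G.forceStep^[n] R :=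
      eventually_all.2 fun w => eventually_imp_distrib_left.2 fun hw =>
        eventually_imp_distrib_left.2 (ihw w hw)
    obtain ⟨N, hN⟩ := eventually_atTop.1 (ihu.and hrest)
    have hv : v ∈ G.forceStep^[N + 1] R := by
      rw [Function.iterate_succ_apply']
      exact Or.inr ⟨u, (hN N le_rfl).1, huv, (hN N le_rfl).2⟩
    exact eventually_atTop.2 ⟨N + 1, fun n hn => G.monotone_iterate_forceStep R hn hv⟩

variable (G) in
/-- `t v` is the time at which `v` is colored and `f v` is the vertex forcing it;
vertices of `R` need no forcer. -/
def IsForcingChronology (R : Set V) (t : V → ℕ) (f : V → V) : Prop :=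
  ∀ v ∉ R, G.Adj (f v) v ∧ t (f v) < t v ∧ ∀ w, G.Adj (f v) w → w ≠ v → t w < t v

lemma IsZeroForcingSet.exists_isForcingChronology [Finite V] {R : Set V}
    (hR : G.IsZeroForcingSet R) : ∃ t f, G.IsForcingChronology R t f := by
  classical
  have hex v : ∃ n, v ∈ G.forceStep^[n] R := (hR v).eventually_mem_iterate_forceStep.exists
  set t : V → ℕ := fun v => Nat.find (hex v)
  have hforcer : ∀ v ∉ R, ∃ u, G.Adj u v ∧ t u < t v ∧ ∀ w, G.Adj u w → w ≠ v → t w < t v := by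
    intro v hvR
    have hv : v ∈ G.forceStep^[t v] R := Nat.find_spec (hex v)
    obtain ⟨m, hm⟩ : ∃ m, t v = m + 1 :=
      Nat.exists_eq_succ_of_ne_zero fun h0 => hvR (by rwa [h0] at hv)
    have hvm : v ∉ G.forceStep^[m] R := Nat.find_min (hex v) (show m < t v by omega)
    rw [hm, Function.iterate_succ_apply'] at hv
    obtain ⟨u, hu, huv, hrest⟩ := hv.resolve_left hvm
    exact ⟨u, huv, (Nat.find_min' _ hu).trans_lt (by omega),
      fun w hw hwv => (Nat.find_min' _ (hrest w hw hwv)).trans_lt (by omega)⟩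
  choose! f hf using hforcer
  exact ⟨t, f, hf⟩

namespace IsForcingChronology

variable {R : Set V} {t : V → ℕ} {f : V → V}

/-- A vertex forces only once: the second vertex it forced would have to be colored first. -/
lemma injOn (hc : G.IsForcingChronology R t f) : Set.InjOn f Rᶜ := by
  intro a ha b hb hab
  by_contra hne
  have hba := (hc a ha).2.2 b (hab ▸ (hc b hb).1) (Ne.symm hne)
  have hab := (hc b hb).2.2 a (hab ▸ (hc a ha).1) hne
  omega

lemma forced_induce (hc : G.IsForcingChronology R t f) {S B : Set V}
    (hB : ∀ u ∈ B, ∀ w, G.Adj u w → w ∉ S → w ∈ B) (v : B) :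
    (G.induce B).Forced (Subtype.val ⁻¹' (R ∩ B ∪ Rᶜ ∩ f ⁻¹' S)) v := by
  induction hv : t v using Nat.strong_induction_on generalizing v with
  | _ n ih =>
  by_cases hvR : (v : V) ∈ R
  · exact .init v (Or.inl ⟨hvR, v.2⟩)
  by_cases hfS : f v ∈ S
  · exact .init v (Or.inr ⟨hvR, hfS⟩)
  obtain ⟨hadj, hft, hrest⟩ := hc v hvR
  have hfB : f v ∈ B := hB v v.2 (f v) hadj.symm hfS
  have hadjB : (G.induce B).Adj ⟨f v, hfB⟩ v := hadj
  exact .force _ v (ih _ (hv ▸ hft) _ rfl) hadjB fun w hw hwv =>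
    ih _ (hv ▸ hrest w hw (Subtype.coe_ne_coe.2 hwv)) _ rfl

end IsForcingChronology

lemma IsZeroForcingSet.zfNumber_le_ncard {X : Set V} (hX : G.IsZeroForcingSet X) :
    G.zfNumber ≤ X.ncard :=
  Nat.sInf_le ⟨X, hX, rfl⟩

theorem IsZeroForcingSet.zfNumber_induce_le [Finite V] {R S B : Set V}
    (hR : G.IsZeroForcingSet R) (hB : ∀ u ∈ B, ∀ w, G.Adj u w → w ∉ S → w ∈ B) :
    (G.induce B).zfNumber ≤ (R ∩ B).ncard + S.ncard := by
  obtain ⟨t, f, hc⟩ := hR.exists_isForcingChronology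
  set T := R ∩ B ∪ Rᶜ ∩ f ⁻¹' S
  calc (G.induce B).zfNumber
      ≤ (Subtype.val ⁻¹' T : Set B).ncard :=
        IsZeroForcingSet.zfNumber_le_ncard (hc.forced_induce hB)
    _ ≤ T.ncard := Set.ncard_le_ncard_of_injOn Subtype.val (fun _ ha => ha)
        Subtype.val_injective.injOn T.toFinite
    _ ≤ (R ∩ B).ncard + (Rᶜ ∩ f ⁻¹' S).ncard := Set.ncard_union_le _ _
    _ ≤ (R ∩ B).ncard + S.ncard := Nat.add_le_add_left (Set.ncard_le_ncard_of_injOn f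
        (fun _ ha => ha.2) (hc.injOn.mono Set.inter_subset_left) S.toFinite) _

lemma subset_of_induce_preconnected {R S A : Set V} (hR : (G.induce R).Preconnected)
    (hRS : Disjoint R S) (hA : ∀ u ∈ A, ∀ w, G.Adj u w → w ∉ S → w ∈ A) {x : V}
    (hxR : x ∈ R) (hxA : x ∈ A) : R ⊆ A := by
  suffices ∀ {a b : R}, (G.induce R).Walk a b → (a : V) ∈ A → (b : V) ∈ A from
    fun y hy => this (hR ⟨x, hxR⟩ ⟨y, hy⟩).some hxA
  intro a b p
  induction p with
  | nil => exact id
  | cons h _ ih => exact fun ha => ih (hA _ ha _ h (hRS.notMem_of_mem_left (Subtype.prop _)))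

end SimpleGraph

theorem stmt5_general {V : Type} [Fintype V] (G : SimpleGraph V)
    (S V₁ V₂ : Set V)
    (h1 : G.IsCompOfDel S V₁) (h2 : G.IsCompOfDel S V₂)
    (hd : Disjoint V₁ V₂) (hcover : V₁ ∪ V₂ = Sᶜ)
    (hz1 : S.ncard < (G.induce V₁).zfNumber)
    (hz2 : S.ncard < (G.induce V₂).zfNumber) :
    ∀ R : Set V, G.IsConnectedZFS R → (S ∩ R).Nonempty := by
  rintro R ⟨hRzf, hRconn⟩
  by_contra hSR
  have hRS : Disjoint R S := by
    rw [Set.disjoint_iff_inter_eq_empty, Set.inter_comm]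
    exact Set.not_nonempty_iff_eq_empty.1 hSR
  obtain ⟨⟨x, hxR⟩⟩ := hRconn.nonempty
  have hx : x ∈ V₁ ∪ V₂ := hcover ▸ hRS.notMem_of_mem_left hxR
  have hside : ∀ {A B : Set V}, G.IsCompOfDel S A → G.IsCompOfDel S B → Disjoint A B →
      x ∈ A → (G.induce B).zfNumber ≤ S.ncard := by
    intro A B hA hB hAB hxA
    have hRA : R ⊆ A :=
      G.subset_of_induce_preconnected hRconn.preconnected hRS hA.2.2.2 hxR hxA
    have hRB : R ∩ B = ∅ := (hAB.mono_left hRA).inter_eq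
    simpa [hRB] using hRzf.zfNumber_induce_le hB.2.2.2
  rcases hx with hx | hx
  · exact (hside h1 h2 hd hx).not_gt hz2
  · exact (hside h2 h1 hd.symm hx).not_gt hz1

/-- If `G − S` has exactly two components `V₁, V₂`, each vertex of `S` has neighbors in
both, and `Z(G[Vᵢ]) > |S|` for `i = 1, 2`, then every connected forcing set meets `S`. -/
theorem stmt5 {V : Type} [Fintype V] (G : SimpleGraph V) (hG : G.Connected)
    (S V₁ V₂ : Set V) (hS : S.Nonempty)
    (h1 : G.IsCompOfDel S V₁) (h2 : G.IsCompOfDel S V₂)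
    (hd : Disjoint V₁ V₂) (hcover : V₁ ∪ V₂ = Sᶜ)
    (hinc : ∀ s ∈ S, (∃ u ∈ V₁, G.Adj s u) ∧ (∃ u ∈ V₂, G.Adj s u))
    (hz1 : S.ncard < (G.induce V₁).zfNumber)
    (hz2 : S.ncard < (G.induce V₂).zfNumber) :
    ∀ R : Set V, G.IsConnectedZFS R → (S ∩ R).Nonempty :=
  stmt5_general G S V₁ V₂ h1 h2 hd hcover hz1 hz2
end

section
/- Let G be a connected graph and v a vertex such that G − v has exactly two connected components and v is attached to no pendant path (i.e., no component of G - v is a path one of whose ends is adjacent to v). Then v belongs to every connected zero forcing set of G. -/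
/-!
If a connected zero forcing set `R` avoids `v`, it lies inside one component of `G − v`, so the
other component `Q` receives all its colour through `v`. A set `F` in which no outside vertex has
exactly one neighbour (a fort) can never be entered by forcing, so every nonempty set disjoint
from a zero forcing set has an outside vertex with a unique neighbour in it. Applied to `Q`, this
vertex is `v`, with unique neighbour `b`; applied to `Q \ {b}`, it is `b`; and so on: peeling `Q`
one vertex at a time shows that `Q` is a path hanging from `v` by an end.
-/

namespace SimpleGraph

variable {V : Type*} {G : SimpleGraph V}

-- Unlike the usual notion, a fort here may be empty.
def IsFort (G : SimpleGraph V) (F : Set V) : Prop :=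
  ∀ u ∉ F, ∀ x ∈ F, G.Adj u x → ∃ y ∈ F, G.Adj u y ∧ y ≠ x

theorem Forced.notMem_of_isFort {S F : Set V} (hF : G.IsFort F) (hSF : Disjoint S F) {x : V}
    (hx : G.Forced S x) : x ∉ F := by
  induction hx with
  | init x hxS => exact Set.disjoint_left.mp hSF hxS
  | force u x _ hux _ ihu ihrest =>
    intro hxF
    obtain ⟨y, hyF, huy, hyx⟩ := hF u ihu x hxF hux
    exact ihrest y huy hyx hyF

theorem IsZeroForcingSet.exists_unique_adj_of_disjoint {S X : Set V} (hS : G.IsZeroForcingSet S)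
    (hSX : Disjoint S X) (hX : X.Nonempty) :
    ∃ u ∉ X, ∃ x ∈ X, G.Adj u x ∧ ∀ y ∈ X, G.Adj u y → y = x := by
  by_contra! hfort
  obtain ⟨x, hx⟩ := hX
  exact (hS x).notMem_of_isFort hfort hSX hx

-- The degree part of `IsPendantPath`, strengthened for the induction: `b` is the only
-- neighbour of `a` in `X`.
def HangsFrom (G : SimpleGraph V) (X : Set V) (a : V) : Prop :=
  (∀ x ∈ X, (G.neighborSet x ∩ X).ncard ≤ 2) ∧
    ∃ b ∈ X, (∀ y ∈ X, G.Adj a y → y = b) ∧ G.Adj a b ∧ (G.neighborSet b ∩ X).ncard ≤ 1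

theorem ncard_neighborSet_inter_le (G : SimpleGraph V) (x b : V) (X : Set V) :
    (G.neighborSet x ∩ X).ncard ≤ (G.neighborSet x ∩ (X \ {b})).ncard + 1 := by
  have := Set.pred_ncard_le_ncard_sdiff_singleton (G.neighborSet x ∩ X) b
  rw [Set.inter_sdiff_assoc] at this
  omega

theorem hangsFrom_of_subset_singleton {X : Set V} {a b : V} (hXb : X ⊆ {b}) (hbX : b ∈ X)
    (hab : G.Adj a b) : G.HangsFrom X a := by
  have hdeg (x : V) : (G.neighborSet x ∩ X).ncard ≤ 1 := by
    simpa [Set.sdiff_eq_empty.mpr hXb] using G.ncard_neighborSet_inter_le x b X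
  exact ⟨fun x _ => (hdeg x).trans one_le_two, b, hbX, fun y hy _ => hXb hy, hab, hdeg b⟩

theorem HangsFrom.of_sdiff_singleton {X : Set V} {a b : V} (h : G.HangsFrom (X \ {b}) b)
    (hX : X.Finite) (hbX : b ∈ X) (hab : G.Adj a b) (huniq : ∀ y ∈ X, G.Adj a y → y = b) :
    G.HangsFrom X a := by
  obtain ⟨hdeg, c, hcX, hcuniq, -, hcdeg⟩ := h
  have hbdeg : (G.neighborSet b ∩ X).ncard ≤ 1 := by
    refine (Set.ncard_le_ncard (t := {c}) ?_).trans (Set.ncard_singleton c).le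
    rintro y ⟨hby, hy⟩
    exact hcuniq y ⟨hy, hby.ne'⟩ hby
  refine ⟨fun x hx => ?_, b, hbX, huniq, hab, hbdeg⟩
  by_cases hxb : x = b
  · exact hxb ▸ hbdeg.trans one_le_two
  by_cases hxc : x = c
  · exact hxc ▸ (G.ncard_neighborSet_inter_le c b X).trans (Nat.add_le_add_right hcdeg 1)
  have hxb' : ¬ G.Adj x b := fun hxb' => hxc (hcuniq x ⟨hx, hxb⟩ hxb'.symm)
  have hsub : G.neighborSet x ∩ X ⊆ G.neighborSet x ∩ (X \ {b}) :=
    fun y ⟨hxy, hy⟩ => ⟨hxy, hy, fun hyb => hxb' (hyb ▸ hxy)⟩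
  exact (Set.ncard_le_ncard hsub (hX.sdiff.inter_of_right _)).trans (hdeg x ⟨hx, hxb⟩)

theorem IsZeroForcingSet.hangsFrom_of_disjoint {S X : Set V} {a : V}
    (hS : G.IsZeroForcingSet S) (hSX : Disjoint S X) (hX : X.Finite) (hXne : X.Nonempty)
    (ha : ∀ u ∉ X, u ≠ a → ∀ x ∈ X, ¬ G.Adj u x) : G.HangsFrom X a := by
  obtain ⟨n, hn⟩ : ∃ n, X.ncard = n := ⟨_, rfl⟩
  induction n generalizing X a with
  | zero => exact absurd ((Set.ncard_eq_zero hX).mp hn) hXne.ne_empty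
  | succ n ih =>
    obtain ⟨u, huX, b, hbX, hub, huniq⟩ := hS.exists_unique_adj_of_disjoint hSX hXne
    obtain rfl : u = a := by_contra fun hua => ha u huX hua b hbX hub
    rcases (X \ {b}).eq_empty_or_nonempty with hXb | hXbne
    · exact hangsFrom_of_subset_singleton (Set.sdiff_eq_empty.mp hXb) hbX hub
    have hattach : ∀ w ∉ X \ {b}, w ≠ b → ∀ x ∈ X \ {b}, ¬ G.Adj w x := by
      intro w hw hwb x hx hwx
      have hwX : w ∉ X := fun h => hw ⟨h, hwb⟩
      by_cases hwu : w = u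
      · exact hx.2 (huniq x hx.1 (hwu ▸ hwx))
      · exact ha w hwX hwu x hx.1 hwx
    have hrest := ih (hSX.mono_right Set.sdiff_subset) hX.sdiff hXbne hattach
      (by rw [Set.ncard_sdiff_singleton_of_mem hbX]; omega)
    exact hrest.of_sdiff_singleton hX hbX hub huniq

theorem IsCompOfDel.isPendantPath_of_disjoint {v : V} {Q S : Set V} (hQ : G.IsCompOfDel {v} Q)
    (hQfin : Q.Finite) (hS : G.IsZeroForcingSet S) (hSQ : Disjoint S Q) :
    G.IsPendantPath v Q := by
  have hattach : ∀ u ∉ Q, u ≠ v → ∀ x ∈ Q, ¬ G.Adj u x :=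
    fun u hu huv x hx hux => hu (hQ.2.2.2 x hx u hux.symm huv)
  obtain ⟨hdeg, b, hbQ, -, hvb, hbdeg⟩ := hS.hangsFrom_of_disjoint hSQ hQfin hQ.1 hattach
  exact ⟨hQ, ⟨hQ.1, hQ.2.2.1, hdeg, b, hbQ, hbdeg⟩, b, hbQ, hvb, hbdeg⟩

theorem IsCompOfDel.subset_of_preconnected {X P R : Set V} (hP : G.IsCompOfDel X P)
    (hR : (G.induce R).Preconnected) (hRX : Disjoint R X) {x : V} (hxR : x ∈ R) (hxP : x ∈ P) :
    R ⊆ P := by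
  have hreach (z : R) (hz : Relation.ReflTransGen (G.induce R).Adj ⟨x, hxR⟩ z) : (z : V) ∈ P := by
    induction hz with
    | refl => exact hxP
    | tail _ hzw ih => exact hP.2.2.2 _ ih _ hzw (Set.disjoint_left.mp hRX (Subtype.prop _))
  exact fun y hyR => hreach ⟨y, hyR⟩ ((reachable_iff_reflTransGen _ _).mp (hR _ _))

end SimpleGraph

theorem stmt6_general {V : Type} [Fintype V] (G : SimpleGraph V) (v : V)
    (P₁ P₂ : Set V) (h1 : G.IsCompOfDel {v} P₁) (h2 : G.IsCompOfDel {v} P₂)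
    (hd : Disjoint P₁ P₂) (hcover : P₁ ∪ P₂ = {v}ᶜ)
    (hnp : ∀ P : Set V, ¬ G.IsPendantPath v P) :
    ∀ R : Set V, G.IsConnectedZFS R → v ∈ R := by
  rintro R ⟨hZ, hRconn⟩
  by_contra hvR
  have hRv : Disjoint R {v} := Set.disjoint_singleton_right.mpr hvR
  obtain ⟨⟨a, haR⟩⟩ := hRconn.nonempty
  have haP : a ∈ P₁ ∪ P₂ := hcover ▸ fun hav => hvR (hav ▸ haR)
  rcases haP with haP₁ | haP₂
  · have hRP₁ := h1.subset_of_preconnected hRconn.preconnected hRv haR haP₁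
    exact hnp P₂ (h2.isPendantPath_of_disjoint P₂.toFinite hZ (hd.mono_left hRP₁))
  · have hRP₂ := h2.subset_of_preconnected hRconn.preconnected hRv haR haP₂
    exact hnp P₁ (h1.isPendantPath_of_disjoint P₁.toFinite hZ (hd.symm.mono_left hRP₂))

/-- A cut vertex `v` with exactly two components in `G − v` and no pendant path attached
belongs to every connected forcing set. -/
theorem stmt6 {V : Type} [Fintype V] (G : SimpleGraph V) (hG : G.Connected) (v : V)
    (P₁ P₂ : Set V) (h1 : G.IsCompOfDel {v} P₁) (h2 : G.IsCompOfDel {v} P₂)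
    (hd : Disjoint P₁ P₂) (hcover : P₁ ∪ P₂ = {v}ᶜ)
    (hnp : ∀ P : Set V, ¬ G.IsPendantPath v P) :
    ∀ R : Set V, G.IsConnectedZFS R → v ∈ R :=
  stmt6_general G v P₁ P₂ h1 h2 hd hcover hnp
end

section
/- Let G be a connected graph and v a vertex such that G − v has at least three connected components. Then v belongs to every connected zero forcing set of G. -/
/-!
If `v ∉ R` for a connected set `R`, then `R` lies inside a single component of `G − v`, so it
misses two components `Q` and `Q'`. A colored vertex adjacent to `Q ∪ Q'` can only be `v`, and `v`
has uncolored neighbors in both `Q` and `Q'`, so no force ever enters `Q ∪ Q'`.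
-/

namespace SimpleGraph

variable {V : Type*} {G : SimpleGraph V}

theorem Forced.mem_of_subset {R A : Set V} (hRA : R ⊆ A)
    (hA : ∀ u ∈ A, ∀ w, G.Adj u w → w ∉ A → ∃ w', G.Adj u w' ∧ w' ≠ w ∧ w' ∉ A)
    {x : V} (hx : G.Forced R x) : x ∈ A := by
  induction hx with
  | init w hw => exact hRA hw
  | force u w _ huw _ hu hrest =>
    by_contra hw
    obtain ⟨w', huw', hw'w, hw'⟩ := hA u hu w huw hw
    exact hw' (hrest w' huw' hw'w)

namespace IsCompOfDel

variable {X P : Set V}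

theorem mem_of_adj_s7 (hP : G.IsCompOfDel X P) {u w : V} (hw : w ∈ P) (hu : u ∉ P)
    (huw : G.Adj u w) : u ∈ X :=
  by_contra fun h => hu (hP.2.2.2 w hw u huw.symm h)

theorem exists_adj (hP : G.IsCompOfDel X P) (hG : G.Connected) (hX : X.Nonempty) :
    ∃ b ∈ P, ∃ x ∈ X, G.Adj x b := by
  obtain ⟨p, hp⟩ := hP.1
  obtain ⟨x, hx⟩ := hX
  obtain ⟨d, -, hd, hd'⟩ :=
    (hG.preconnected p x).some.exists_boundary_dart P hp (Set.disjoint_right.mp hP.2.1 hx)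
  exact ⟨d.fst, hd, d.snd, hP.mem_of_adj_s7 hd hd' d.adj.symm, d.adj.symm⟩

theorem subset_of_connected_s7 (hP : G.IsCompOfDel X P) {R : Set V} (hRX : Disjoint R X)
    (hR : (G.induce R).Connected) {r : V} (hrR : r ∈ R) (hrP : r ∈ P) : R ⊆ P := by
  intro s hs
  by_contra hsP
  obtain ⟨d, -, hd, hd'⟩ := (hR.preconnected ⟨r, hrR⟩ ⟨s, hs⟩).some.exists_boundary_dart
    {x | (x : V) ∈ P} hrP hsP
  exact hd' (hP.2.2.2 _ hd _ d.adj (Set.disjoint_left.mp hRX d.snd.2))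

theorem not_forced_of_disjoint (hG : G.Connected) {v : V} {Q Q' R : Set V}
    (hQ : G.IsCompOfDel {v} Q) (hQ' : G.IsCompOfDel {v} Q') (hQQ' : Disjoint Q Q')
    (hRQ : Disjoint R (Q ∪ Q')) {x : V} (hx : x ∈ Q) : ¬ G.Forced R x := by
  have escape : ∀ {P P' : Set V}, G.IsCompOfDel {v} P → G.IsCompOfDel {v} P' → Disjoint P P' →
      ∀ u ∉ P ∪ P', ∀ w ∈ P, G.Adj u w → ∃ w', G.Adj u w' ∧ w' ≠ w ∧ w' ∈ P ∪ P' := by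
    intro P P' hP hP' hPP' u hu w hw huw
    obtain rfl : u = v := hP.mem_of_adj_s7 hw (fun h => hu (.inl h)) huw
    obtain ⟨b, hb, _, rfl, hub⟩ := hP'.exists_adj hG (Set.singleton_nonempty u)
    exact ⟨b, hub, fun h => Set.disjoint_left.mp hPP' (h ▸ hw) hb, .inr hb⟩
  intro hRx
  refine hRx.mem_of_subset (A := (Q ∪ Q')ᶜ) (Set.subset_compl_iff_disjoint_right.mpr hRQ) ?_
    (.inl hx)
  intro u hu w huw hw
  simp only [Set.mem_compl_iff, not_not] at hu hw ⊢
  rcases hw with hw | hw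
  · exact escape hQ hQ' hQQ' u hu w hw huw
  · rw [Set.union_comm] at hu ⊢
    exact escape hQ' hQ hQQ'.symm u hu w hw huw

end IsCompOfDel

end SimpleGraph

theorem stmt7_general {V : Type} (G : SimpleGraph V) (hG : G.Connected) (v : V)
    (h3 : G.DelHasThreeComps v) :
    ∀ R : Set V, G.IsConnectedZFS R → v ∈ R := by
  rintro R ⟨hRzfs, hRconn⟩
  by_contra hvR
  obtain ⟨P₁, P₂, P₃, h₁, h₂, h₃, h₁₂, h₁₃, h₂₃⟩ := h3
  have inside : ∀ {P}, G.IsCompOfDel {v} P → ¬ Disjoint R P → R ⊆ P := fun hP hRP =>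
    let ⟨_, hr, hrP⟩ := Set.not_disjoint_iff.mp hRP
    hP.subset_of_connected_s7 (Set.disjoint_singleton_right.mpr hvR) hRconn hr hrP
  have missed : ∀ {Q Q'}, G.IsCompOfDel {v} Q → G.IsCompOfDel {v} Q' → Disjoint Q Q' →
      Disjoint R Q → Disjoint R Q' → False := fun hQ hQ' hQQ' hRQ hRQ' =>
    let ⟨q, hq⟩ := hQ.1
    hQ.not_forced_of_disjoint hG hQ' hQQ' (Set.disjoint_union_right.mpr ⟨hRQ, hRQ'⟩) hq (hRzfs q)
  by_cases hR₁ : Disjoint R P₁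
  · by_cases hR₂ : Disjoint R P₂
    · exact missed h₁ h₂ h₁₂ hR₁ hR₂
    · exact missed h₁ h₃ h₁₃ hR₁ (h₂₃.mono_left (inside h₂ hR₂))
  · exact missed h₂ h₃ h₂₃ (h₁₂.mono_left (inside h₁ hR₁)) (h₁₃.mono_left (inside h₁ hR₁))

/-- A cut vertex `v` such that `G − v` has at least three components belongs to every
connected forcing set. -/
theorem stmt7 {V : Type} [Fintype V] (G : SimpleGraph V) (hG : G.Connected) (v : V)
    (h3 : G.DelHasThreeComps v) :
    ∀ R : Set V, G.IsConnectedZFS R → v ∈ R :=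
  stmt7_general G hG v h3
end

section
/- Let G be a connected graph that is not a path and B a block of G that is not a cut edge of a pendant path of G. Then every connected zero forcing set of G contains at least δ(G[B]) vertices of B, where δ denotes minimum degree. -/
/-!
Let `v` be the first vertex of `B` outside `R` to be forced, say by `u`. If `u ∈ B`, then `u`
and all its neighbours in `B` other than `v` were colored before, hence lie in `R`: that is at
least `deg_B u ≥ δ(G[B])` vertices.

If `u ∉ B`, the component of `G - B` containing `u` is attached to `B` at `v` only (a path
through it joining two vertices of `B` would be an ear enlarging the block). Hence that component
meets `R`, for otherwise nothing could have forced it before `v`; and since `R` is connected and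
misses `v`, all of `R` lies there. The rest of the graph, beyond `v`, is then colored along a
single forcing chain starting at `v`, so it is a pendant path at `v`, and `B`, lying on that path
plus `v`, is its cut edge.
-/

namespace SimpleGraph

variable {V : Type*} {G : SimpleGraph V} {R A B : Set V} {x : V} {M : List V}

variable (G) in
def ForcedWithin (R : Set V) : ℕ → V → Prop
  | 0, v => v ∈ R
  | n + 1, v => ForcedWithin R n v ∨
      ∃ u, ForcedWithin R n u ∧ G.Adj u v ∧ ∀ w, G.Adj u w → w ≠ v → ForcedWithin R n w

theorem ForcedWithin.mono {m n : ℕ} (hmn : m ≤ n) {v : V} (hv : G.ForcedWithin R m v) :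
    G.ForcedWithin R n v := by
  induction n, hmn using Nat.le_induction with
  | base => exact hv
  | succ n _ ih => exact Or.inl ih

theorem Forced.exists_forcedWithin [Fintype V] {v : V} (h : G.Forced R v) :
    ∃ n, G.ForcedWithin R n v := by
  induction h with
  | init v hv => exact ⟨0, hv⟩
  | force u v _ huv _ ihu ihrest =>
    obtain ⟨n₀, hn₀⟩ := ihu
    have : ∀ w, ∃ n, G.Adj u w → w ≠ v → G.ForcedWithin R n w := fun w => by
      by_cases h : G.Adj u w ∧ w ≠ v
      · obtain ⟨n, hn⟩ := ihrest w h.1 h.2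
        exact ⟨n, fun _ _ => hn⟩
      · exact ⟨0, fun h₁ h₂ => absurd ⟨h₁, h₂⟩ h⟩
    choose f hf using this
    refine ⟨max n₀ (Finset.univ.sup f) + 1,
      Or.inr ⟨u, hn₀.mono (le_max_left _ _), huv, fun w h₁ h₂ => (hf w h₁ h₂).mono ?_⟩⟩
    exact (Finset.le_sup (Finset.mem_univ w)).trans (le_max_right _ _)

theorem IsZeroForcingSet.exists_forall_forcedWithin [Fintype V] (hR : G.IsZeroForcingSet R) :
    ∃ n, ∀ v, G.ForcedWithin R n v := by
  choose f hf using fun v => (hR v).exists_forcedWithin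
  exact ⟨Finset.univ.sup f, fun v => (hf v).mono (Finset.le_sup (Finset.mem_univ v))⟩

theorem IsZeroForcingSet.exists_first_forced [Fintype V] (hR : G.IsZeroForcingSet R)
    {S : Set V} (hSR : Disjoint S R) (hS : S.Nonempty) :
    ∃ v ∈ S, ∃ m, (∀ w ∈ S, ¬ G.ForcedWithin R m w) ∧
      ∃ u, G.ForcedWithin R m u ∧ G.Adj u v ∧ ∀ w, G.Adj u w → w ≠ v → G.ForcedWithin R m w := by
  classical
  have hex : ∃ n, ∃ v ∈ S, G.ForcedWithin R n v := by
    obtain ⟨v, hv⟩ := hS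
    obtain ⟨n, hn⟩ := (hR v).exists_forcedWithin
    exact ⟨n, v, hv, hn⟩
  obtain ⟨v, hvS, hv⟩ := Nat.find_spec hex
  have hmin : ∀ m < Nat.find hex, ∀ w ∈ S, ¬ G.ForcedWithin R m w :=
    fun m hm w hw h => Nat.find_min hex hm ⟨w, hw, h⟩
  obtain ⟨m, hm⟩ : ∃ m, Nat.find hex = m + 1 :=
    Nat.exists_eq_add_one_of_ne_zero fun h0 => by
      rw [h0] at hv
      exact hSR.notMem_of_mem_left hvS hv
  rw [hm] at hv hmin
  rcases hv with hv | hforce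
  · exact absurd hv (hmin m m.lt_add_one v hvS)
  · exact ⟨v, hvS, m, hmin m m.lt_add_one, hforce⟩

theorem Walk.IsPath.notMem_support_takeUntil_or_dropUntil [DecidableEq V] {u v y z : V}
    {p : G.Walk u v} (hp : p.IsPath) (hy : y ∈ p.support) (hzy : z ≠ y) :
    z ∉ (p.takeUntil y hy).support ∨ z ∉ (p.dropUntil y hy).support := by
  by_contra! h
  have hnd := hp.support_nodup
  rw [← p.take_spec hy, Walk.support_append] at hnd
  have hz : z ∈ (p.dropUntil y hy).support.tail := by
    have := h.2
    rw [← Walk.cons_tail_support] at this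
    exact (List.mem_cons.mp this).resolve_left hzy
  exact List.disjoint_of_nodup_append hnd h.1 hz

variable (G) in
def ReachableOutside (B : Set V) (u c : V) : Prop :=
  ∃ p : G.Walk u c, ∀ y ∈ p.support, y ∉ B

theorem ReachableOutside.refl {u : V} (hu : u ∉ B) : G.ReachableOutside B u u :=
  ⟨.nil, by simpa using hu⟩

theorem ReachableOutside.notMem {u c : V} (h : G.ReachableOutside B u c) : c ∉ B :=
  h.elim fun p hp => hp c p.end_mem_support

theorem ReachableOutside.tail {u c d : V} (h : G.ReachableOutside B u c) (hcd : G.Adj c d)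
    (hd : d ∉ B) : G.ReachableOutside B u d := by
  obtain ⟨p, hp⟩ := h
  refine ⟨p.concat hcd, fun y hy => ?_⟩
  rw [Walk.support_concat, List.mem_append, List.mem_singleton] at hy
  rcases hy with hy | rfl
  exacts [hp y hy, hd]

theorem ReachableOutside.exists_isPath {u c₁ c₂ : V} (h₁ : G.ReachableOutside B u c₁)
    (h₂ : G.ReachableOutside B u c₂) :
    ∃ p : G.Walk c₁ c₂, p.IsPath ∧ ∀ y ∈ p.support, y ∉ B := by
  classical
  obtain ⟨p₁, hp₁⟩ := h₁
  obtain ⟨p₂, hp₂⟩ := h₂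
  refine ⟨(p₁.reverse.append p₂).bypass, Walk.bypass_isPath _, fun y hy => ?_⟩
  have := Walk.support_bypass_subset_support _ hy
  rw [Walk.mem_support_append_iff, Walk.support_reverse, List.mem_reverse] at this
  exact this.elim (hp₁ y) (hp₂ y)

theorem IsBiconnectedSet.union_support {c₁ c₂ w₁ w₂ : V} (hB : G.IsBiconnectedSet B)
    (p : G.Walk c₁ c₂) (hp : p.IsPath) (hpB : ∀ y ∈ p.support, y ∉ B)
    (hw₁ : w₁ ∈ B) (hw₂ : w₂ ∈ B) (hw : w₁ ≠ w₂) (a₁ : G.Adj c₁ w₁) (a₂ : G.Adj c₂ w₂) :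
    G.IsBiconnectedSet (B ∪ {y | y ∈ p.support}) := by
  classical
  set S := {y | y ∈ p.support}
  have hS := p.connected_induce_support
  refine ⟨connected_induce_union hB.1.preconnected hS.preconnected hw₁ p.start_mem_support
    a₁.symm, fun z hz _ => ?_⟩
  by_cases hzB : z ∈ B
  · have hzS : z ∉ S := fun h => hpB z h hzB
    obtain ⟨w, c, hwB, hwz, hcS, hwc⟩ : ∃ w c, w ∈ B ∧ w ≠ z ∧ c ∈ S ∧ G.Adj w c := by
      rcases eq_or_ne w₁ z with rfl | h
      · exact ⟨w₂, c₂, hw₂, hw.symm, p.end_mem_support, a₂.symm⟩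
      · exact ⟨w₁, c₁, hw₁, h, p.start_mem_support, a₁.symm⟩
    rw [Set.union_sdiff_distrib, Set.sdiff_singleton_eq_self hzS]
    exact connected_induce_union (hB.2 z hzB ⟨w, hwB, hwz⟩).preconnected hS.preconnected
      ⟨hwB, hwz⟩ hcS hwc
  · rw [Set.union_sdiff_distrib, Set.sdiff_singleton_eq_self hzB]
    refine induce_connected_of_patches w₁ (Or.inl hw₁) fun {y} hy => ?_
    rcases hy with hyB | ⟨hyS, hyz⟩
    · exact ⟨B, Set.subset_union_left, hw₁, hyB, hB.1.preconnected _ _⟩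
    have patch : ∀ {a b : V} (q : G.Walk a b), (∀ x ∈ q.support, x ∈ S ∧ x ≠ z) →
        y ∈ q.support → ∀ c ∈ q.support, ∀ w ∈ B, G.Adj w c →
        ∃ s' ⊆ B ∪ S \ {z}, ∃ (hw₁' : w₁ ∈ s') (hy' : y ∈ s'),
          (G.induce s').Reachable ⟨w₁, hw₁'⟩ ⟨y, hy'⟩ := by
      intro a b q hq hyq c hc w hw hwc
      have hT := connected_induce_union hB.1.preconnected
        q.connected_induce_support.preconnected hw hc hwc
      exact ⟨_, Set.union_subset_union_right _ fun x hx => ⟨(hq x hx).1, (hq x hx).2⟩,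
        Or.inl hw₁, Or.inr hyq, hT.preconnected _ _⟩
    rcases hp.notMem_support_takeUntil_or_dropUntil hyS (Ne.symm hyz) with h | h
    · exact patch (p.takeUntil y hyS)
        (fun x hx => ⟨p.support_takeUntil_subset_support hyS hx, fun e => h (e ▸ hx)⟩)
        (Walk.end_mem_support _) c₁ (Walk.start_mem_support _) w₁ hw₁ a₁.symm
    · exact patch (p.dropUntil y hyS)
        (fun x hx => ⟨p.support_dropUntil_subset_support hyS hx, fun e => h (e ▸ hx)⟩)
        (Walk.start_mem_support _) c₂ (Walk.end_mem_support _) w₂ hw₂ a₂.symm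

theorem IsBlock.eq_of_reachableOutside {u c₁ c₂ w₁ w₂ : V} (hB : G.IsBlock B)
    (h₁ : G.ReachableOutside B u c₁) (h₂ : G.ReachableOutside B u c₂)
    (hw₁ : w₁ ∈ B) (hw₂ : w₂ ∈ B) (a₁ : G.Adj c₁ w₁) (a₂ : G.Adj c₂ w₂) : w₁ = w₂ := by
  by_contra hw
  obtain ⟨p, hp, hpB⟩ := h₁.exists_isPath h₂
  have := hB.2 _ Set.subset_union_left (hB.1.union_support p hp hpB hw₁ hw₂ hw a₁ a₂)
  exact hpB c₁ p.start_mem_support (this ▸ Or.inr p.start_mem_support)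

theorem IsBlock.reachableOutside_or_mem {u v c s : V} {S : Set V} (hB : G.IsBlock B)
    (hu : u ∉ B) (hv : v ∈ B) (huv : G.Adj u v) (hS : (G.induce S).Connected) (hc : c ∈ S)
    (hcu : G.ReachableOutside B u c) (hs : s ∈ S) : G.ReachableOutside B u s ∨ v ∈ S := by
  obtain ⟨q⟩ := hS.preconnected ⟨c, hc⟩ ⟨s, hs⟩
  set q' := q.map (Embedding.induce S).toHom
  by_contra! h
  obtain ⟨d, hd, hd₁, hd₂⟩ := q'.exists_boundary_dart {x | G.ReachableOutside B u x} hcu h.1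
  have hdB : d.snd ∈ B := by
    by_contra hdB
    exact hd₂ (hd₁.tail d.adj hdB)
  have hdS : d.snd ∈ S := by
    have := q'.dart_snd_mem_support_of_mem_darts hd
    simp only [q', Walk.support_map, List.mem_map] at this
    obtain ⟨x, -, hx⟩ := this
    exact hx ▸ x.2
  have := hB.eq_of_reachableOutside (.refl hu) hd₁ hv hdB huv d.adj
  exact h.2 (this ▸ hdS)

theorem IsBlock.forcedWithin_of_reachableOutside {u v : V} (hB : G.IsBlock B)
    (hu : u ∉ B) (hv : v ∈ B) (huv : G.Adj u v)
    (hR : ∀ c, G.ReachableOutside B u c → c ∉ R) {m : ℕ} (hum : G.ForcedWithin R m u) :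
    G.ForcedWithin R m v := by
  suffices ∀ n w, G.ReachableOutside B u w → G.ForcedWithin R n w → G.ForcedWithin R n v from
    this m u (.refl hu) hum
  intro n
  induction n with
  | zero => exact fun w hw hw₀ => absurd hw₀ (hR w hw)
  | succ n ih =>
    rintro w hw (hwn | ⟨y, hyn, hyw, -⟩)
    · exact Or.inl (ih w hw hwn)
    · by_cases hyB : y ∈ B
      · have := hB.eq_of_reachableOutside (.refl hu) hw hv hyB huv hyw.symm
        exact Or.inl (this ▸ hyn)
      · exact Or.inl (ih y (hw.tail hyw.symm hyB) hyn)

theorem exists_adj_of_connected_induce {S : Set V} (hS : (G.induce S).Connected) {a b : V}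
    (ha : a ∈ S) (hb : b ∈ S) (hab : a ≠ b) : ∃ y ∈ S, G.Adj a y := by
  obtain ⟨p⟩ := hS.preconnected ⟨a, ha⟩ ⟨b, hb⟩
  cases p with
  | nil => exact absurd rfl hab
  | cons h _ => exact ⟨_, Subtype.property _, h⟩

theorem connected_induce_of_isChain :
    ∀ {L : List V}, L ≠ [] → L.IsChain G.Adj → (G.induce {y | y ∈ L}).Connected
  | [a], _, _ => (Walk.nil : G.Walk a a).connected_induce_support
  | a :: b :: L, _, h => by
    have hab := List.isChain_cons_cons.mp h
    have : {y | y ∈ a :: b :: L} = {y | y ∈ [a]} ∪ {y | y ∈ b :: L} := by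
      ext; simp
    rw [this]
    exact connected_induce_union (Walk.nil : G.Walk a a).connected_induce_support.preconnected
      (connected_induce_of_isChain (List.cons_ne_nil b L) hab.2).preconnected (by simp) (by simp)
      hab.1

theorem IsBiconnectedSet.ncard_eq_two {a w : V} (hB : G.IsBiconnectedSet B)
    (hBnt : B.Nontrivial) (ha : a ∈ B) (h : G.neighborSet a ∩ B ⊆ {w}) : B.ncard = 2 := by
  obtain ⟨b, hb, hba⟩ := hBnt.exists_ne a
  obtain ⟨y, hyB, hay⟩ := exists_adj_of_connected_induce hB.1 ha hb hba.symm
  obtain rfl : y = w := h ⟨hay, hyB⟩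
  have hay' : a ≠ y := G.ne_of_adj hay
  have hsub : B ⊆ {a, y} := by
    intro c hc
    by_contra hc'
    simp only [Set.mem_insert_iff, Set.mem_singleton_iff, not_or] at hc'
    obtain ⟨z, ⟨hzB, hzy⟩, haz⟩ := exists_adj_of_connected_induce
      (hB.2 y hyB ⟨a, ha, hay'⟩) ⟨ha, hay'⟩ ⟨hc, hc'.2⟩ (Ne.symm hc'.1)
    exact hzy (h ⟨haz, hzB⟩)
  rw [hsub.antisymm (Set.insert_subset ha (Set.singleton_subset_iff.mpr hyB)),
    Set.ncard_pair hay']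

theorem minDegOn_le {v : V} (hv : v ∈ B) : G.minDegOn B ≤ (G.neighborSet v ∩ B).ncard :=
  Nat.sInf_le ⟨v, hv, rfl⟩

theorem minDegOn_eq_zero_of_subsingleton (hB : B.Subsingleton) : G.minDegOn B = 0 := by
  rcases hB.eq_empty_or_singleton with rfl | ⟨v, rfl⟩
  · simp [minDegOn]
  · simp [minDegOn]

theorem minDegOn_le_ncard_inter [Finite V] {T : Set V} {u v : V} (hu : u ∈ B) (hv : v ∈ B)
    (huv : G.Adj u v) (huT : u ∈ T) (hT : ∀ w ∈ B, G.Adj u w → w ≠ v → w ∈ T) :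
    G.minDegOn B ≤ (T ∩ B).ncard :=
  calc G.minDegOn B ≤ (G.neighborSet u ∩ B).ncard := minDegOn_le hu
    _ = ((G.neighborSet u ∩ B) \ {v}).ncard + 1 :=
      (Set.ncard_sdiff_singleton_add_one (s := G.neighborSet u ∩ B) ⟨huv, hv⟩).symm
    _ = (insert u ((G.neighborSet u ∩ B) \ {v})).ncard :=
      (Set.ncard_insert_of_notMem fun h => G.loopless.irrefl u h.1.1).symm
    _ ≤ (T ∩ B).ncard := Set.ncard_le_ncard
      (Set.insert_subset ⟨huT, hu⟩ fun w hw => ⟨hT w hw.1.2 hw.1.1 hw.2, hw.1.2⟩)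

/-- The forcing chain of a region `A` that meets the rest of the graph only through `x`:
the colored vertices of `A`, newest first, followed by `x`. Consecutive vertices are
adjacent, and a vertex other than the newest has no neighbour in `A ∪ {x}` besides older
ones and the vertex it forced. -/
structure IsSpine (G : SimpleGraph V) (A : Set V) (x : V) (M : List V) : Prop where
  getLast?_eq : M.getLast? = some x
  nodup : M.Nodup
  mem : ∀ a ∈ M, a ∈ insert x A
  isChain : M.IsChain G.Adj
  adj_mem : ∀ l₁ b a l₂, M = l₁ ++ b :: a :: l₂ → ∀ w ∈ insert x A, G.Adj a w → w ∈ l₂ ∨ w = b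

theorem isSpine_singleton : G.IsSpine A x [x] where
  getLast?_eq := rfl
  nodup := List.nodup_singleton x
  mem := by simp
  isChain := List.isChain_singleton x
  adj_mem l₁ b a l₂ h := by
    have := congrArg List.length h
    simp at this
    omega

namespace IsSpine

theorem self_mem (hM : G.IsSpine A x M) : x ∈ M :=
  List.mem_of_mem_getLast? hM.getLast?_eq

theorem eq_cons_of_adj (hM : G.IsSpine A x M) {u w : V} (hu : u ∈ M) (hw : w ∈ insert x A)
    (hwM : w ∉ M) (huw : G.Adj u w) : ∃ t, M = u :: t := by
  obtain ⟨l₁, l₂, rfl⟩ := List.append_of_mem hu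
  rcases l₁.eq_nil_or_concat with rfl | ⟨l₁, b, rfl⟩
  · exact ⟨l₂, rfl⟩
  · rcases hM.adj_mem l₁ b u l₂ (by simp) w hw huw with h | rfl <;> simp_all

theorem cons {u v : V} {t : List V} (hM : G.IsSpine A x (u :: t)) (hv : v ∈ A)
    (hvM : v ∉ u :: t) (huv : G.Adj u v) (hrest : ∀ w ∈ insert x A, G.Adj u w → w ≠ v → w ∈ t) :
    G.IsSpine A x (v :: u :: t) where
  getLast?_eq := by rw [List.getLast?_cons_cons]; exact hM.getLast?_eq
  nodup := List.nodup_cons.mpr ⟨hvM, hM.nodup⟩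
  mem a ha := (List.mem_cons.mp ha).elim (fun h => h ▸ Or.inr hv) (hM.mem a)
  isChain := List.isChain_cons_cons.mpr ⟨huv.symm, hM.isChain⟩
  adj_mem l₁ b a l₂ h w hw haw := by
    cases l₁ with
    | nil =>
      simp only [List.nil_append, List.cons.injEq] at h
      obtain ⟨rfl, rfl, rfl⟩ := h
      by_cases hwv : w = v
      exacts [Or.inr hwv, Or.inl (hrest w hw haw hwv)]
    | cons c l₁ =>
      simp only [List.cons_append, List.cons.injEq] at h
      exact hM.adj_mem l₁ b a l₂ h.2 w hw haw

theorem mem_getLast?_or_head?_of_adj (hM : G.IsSpine A x M) (hcov : ∀ a ∈ A, a ∈ M)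
    {l₁ l₂ : List V} {a w : V} (h : M = l₁ ++ a :: l₂) (hw : w ∈ insert x A)
    (haw : G.Adj a w) : w ∈ l₁.getLast? ∨ w ∈ l₂.head? := by
  have hnd := List.nodup_append.mp (h ▸ hM.nodup)
  have ha₂ : a ∉ l₂ := (List.nodup_cons.mp hnd.2.1).1
  have hwM : w ∈ M := by
    rcases hw with rfl | hw
    exacts [hM.self_mem, hcov w hw]
  rw [h, List.mem_append, List.mem_cons] at hwM
  rcases hwM with hw₁ | rfl | hw₂
  · left
    rcases l₁.eq_nil_or_concat with rfl | ⟨l₁, b, rfl⟩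
    · simp at hw₁
    rcases hM.adj_mem l₁ b a l₂ (by simp [h]) w hw haw with hw₂ | rfl
    · exact absurd rfl (hnd.2.2 w hw₁ w (List.mem_cons_of_mem a hw₂))
    · simp
  · exact absurd haw (G.loopless.irrefl _)
  · right
    obtain ⟨m₁, m₂, rfl⟩ := List.append_of_mem hw₂
    rcases m₁.eq_nil_or_concat with rfl | ⟨m₁, c, rfl⟩
    · simp
    rcases hM.adj_mem (l₁ ++ a :: m₁) c w m₂ (by simp [h]) a (hM.mem a (by simp [h]))
      haw.symm with ha | rfl <;> simp_all

theorem neighborSet_inter_subset (hM : G.IsSpine A x M) (hcov : ∀ a ∈ A, a ∈ M)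
    {l₁ l₂ : List V} {a : V} (h : M = l₁ ++ a :: l₂) :
    G.neighborSet a ∩ A ⊆ {l₁.getLastD a, l₂.headD a} := by
  rintro w ⟨haw, hw⟩
  rcases hM.mem_getLast?_or_head?_of_adj hcov h (Or.inr hw) haw with h' | h'
  · simp [List.getLastD_eq_getLast?, Option.mem_def.mp h']
  · simp [List.headD_eq_head?_getD, Option.mem_def.mp h']

theorem isPendantPath (hM : G.IsSpine A x M) (hcov : ∀ a ∈ A, a ∈ M) (hxA : x ∉ A)
    (hA : ∀ a ∈ A, ∀ w, G.Adj a w → w ∈ insert x A) (hAne : A.Nonempty) :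
    G.IsPendantPath x A := by
  obtain ⟨D, hD⟩ := List.getLast?_eq_some_iff.mp hM.getLast?_eq
  have hxD : x ∉ D := by
    have := hD ▸ hM.nodup
    simp only [List.nodup_append, List.mem_singleton] at this
    exact fun h => this.2.2 x h x rfl rfl
  have hAD : A = {a | a ∈ D} := by
    ext a
    refine ⟨fun ha => ?_, fun ha => ?_⟩
    · have := hD ▸ hcov a ha
      simp only [List.mem_append, List.mem_singleton] at this
      exact this.resolve_right (ne_of_mem_of_not_mem ha hxA)
    · exact (hM.mem a (hD ▸ List.mem_append_left _ ha)).resolve_left (ne_of_mem_of_not_mem ha hxD)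
  obtain ⟨a₀, ha₀⟩ := hAne
  rcases D.eq_nil_or_concat' with rfl | ⟨D, b, rfl⟩
  · simp [hAD] at ha₀
  have hb : b ∈ A := by simp [hAD]
  have hchain := (List.isChain_append.mp (hD ▸ hM.isChain)).2.2 b (by simp) x (by simp)
  have hconn : (G.induce A).Connected := by
    rw [hAD]
    exact connected_induce_of_isChain (by simp) (List.isChain_append.mp (hD ▸ hM.isChain)).1
  have hdeg : ∀ a ∈ A, (G.neighborSet a ∩ A).ncard ≤ 2 := by
    intro a ha
    obtain ⟨l₁, l₂, h⟩ := List.append_of_mem (hcov a ha)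
    exact (Set.ncard_le_ncard (hM.neighborSet_inter_subset hcov h)).trans
      ((Set.ncard_insert_le _ _).trans (by simp))
  have hb₁ : (G.neighborSet b ∩ A).ncard ≤ 1 := by
    have h : M = D ++ b :: [x] := by simp [hD]
    refine (Set.ncard_le_ncard (t := {D.getLastD b}) fun w hw => ?_).trans (by simp)
    rcases hM.neighborSet_inter_subset hcov h hw with h' | h'
    · exact h'
    · simp only [List.headD_cons] at h'
      exact absurd (h' ▸ hw.2) hxA
  exact ⟨⟨⟨a₀, ha₀⟩, Set.disjoint_singleton_right.mpr hxA, hconn,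
      fun a ha w haw hwx => (hA a ha w haw).resolve_left hwx⟩,
    ⟨⟨a₀, ha₀⟩, hconn, hdeg, b, hb, hb₁⟩, b, hb, hchain.symm, hb₁⟩

/-- The newest vertex of `B` on the spine has at most one neighbour in `B`. -/
theorem ncard_eq_two (hM : G.IsSpine A x M) (hcov : ∀ a ∈ A, a ∈ M)
    (hB : G.IsBiconnectedSet B) (hBnt : B.Nontrivial) (hBA : B ⊆ insert x A) : B.ncard = 2 := by
  classical
  obtain ⟨b, hb⟩ := hBnt.nonempty
  have hbM : b ∈ M := by
    rcases hBA hb with rfl | h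
    exacts [hM.self_mem, hcov b h]
  obtain ⟨aq, haq⟩ : ∃ aq, M.find? (· ∈ B) = some aq :=
    Option.isSome_iff_exists.mp (List.find?_isSome.mpr ⟨b, hbM, by simpa using hb⟩)
  obtain ⟨haqB, l₁, l₂, hsplit, hl₁⟩ := List.find?_eq_some_iff_append.mp haq
  refine hB.ncard_eq_two hBnt (a := aq) (w := l₂.headD aq) (by simpa using haqB)
    fun w ⟨haw, hwB⟩ => ?_
  rcases hM.mem_getLast?_or_head?_of_adj hcov hsplit (hBA hwB) haw with h | h
  · exact absurd hwB (by simpa using hl₁ w (List.mem_of_mem_getLast? h))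
  · simp [List.headD_eq_head?_getD, Option.mem_def.mp h]

end IsSpine

theorem exists_isSpine_forcedWithin (hxA : x ∉ A) (hAR : Disjoint A R)
    (hA : ∀ a ∈ A, ∀ w, G.Adj a w → w ∈ insert x A) (n : ℕ) :
    ∃ M, G.IsSpine A x M ∧ ∀ a ∈ A, G.ForcedWithin R n a ↔ a ∈ M := by
  induction n with
  | zero =>
    refine ⟨[x], isSpine_singleton, fun a ha => ⟨fun h => absurd h (hAR.notMem_of_mem_left ha),
      fun h => absurd (List.mem_singleton.mp h ▸ ha) hxA⟩⟩
  | succ n ih =>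
    obtain ⟨M, hM, hMn⟩ := ih
    have hcol : ∀ w ∈ insert x A, G.ForcedWithin R n w → w ∈ M := by
      rintro w (rfl | hw) hwn
      exacts [hM.self_mem, (hMn w hw).mp hwn]
    by_cases hnew : ∃ v ∈ A, G.ForcedWithin R (n + 1) v ∧ ¬ G.ForcedWithin R n v
    · obtain ⟨v, hvA, hv, hvn⟩ := hnew
      obtain ⟨u, hun, huv, hrest⟩ := Or.resolve_left hv hvn
      have hvM : v ∉ M := fun h => hvn ((hMn v hvA).mpr h)
      -- only the newest vertex of the spine can still force
      obtain ⟨t, rfl⟩ :=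
        hM.eq_cons_of_adj (hcol u (hA v hvA u huv.symm) hun) (Or.inr hvA) hvM huv
      refine ⟨v :: u :: t, hM.cons hvA hvM huv fun w hw huw hwv => ?_,
        fun a ha => ⟨fun h => ?_, fun h => ?_⟩⟩
      · exact (List.mem_cons.mp (hcol w hw (hrest w huw hwv))).resolve_left (G.ne_of_adj huw).symm
      · by_contra haM
        rcases h with h | ⟨u', hu'n, hu'a, hrest'⟩
        · exact haM (List.mem_cons_of_mem _ ((hMn a ha).mp h))
        · obtain ⟨t', ht'⟩ := hM.eq_cons_of_adj (hcol u' (hA a ha u' hu'a.symm) hu'n) (Or.inr ha)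
            (fun h => haM (List.mem_cons_of_mem _ h)) hu'a
          obtain rfl : u = u' := (List.cons.inj ht').1
          exact hvn (hrest' v huv fun hva => haM (hva ▸ List.mem_cons_self))
      · rcases List.mem_cons.mp h with rfl | h
        exacts [hv, ((hMn a ha).mpr h).mono n.le_succ]
    · push Not at hnew
      exact ⟨M, hM, fun a ha => ⟨fun h => (hMn a ha).mp (hnew a ha h),
        fun h => ((hMn a ha).mpr h).mono n.le_succ⟩⟩

theorem IsBlock.exists_isPendantPath [Fintype V] {u v : V}
    (hR : G.IsZeroForcingSet R) (hB : G.IsBlock B) (hBnt : B.Nontrivial) (hu : u ∉ B)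
    (hv : v ∈ B) (huv : G.Adj u v) (hRu : ∀ r ∈ R, G.ReachableOutside B u r) :
    ∃ x P, G.IsPendantPath x P ∧ B ⊆ P ∪ {x} ∧ B.ncard = 2 := by
  set A := {a | ¬ G.ReachableOutside B u a ∧ a ≠ v}
  have hvA : v ∉ A := fun h => h.2 rfl
  have hAR : Disjoint A R := Set.disjoint_left.mpr fun a ha haR => ha.1 (hRu a haR)
  have hBA : B ⊆ insert v A := fun b hb =>
    or_iff_not_imp_left.mpr fun hbv => ⟨fun h => h.notMem hb, hbv⟩
  have hA : ∀ a ∈ A, ∀ w, G.Adj a w → w ∈ insert v A := by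
    intro a ha w haw
    by_contra hw
    have hwv : w ≠ v := fun h => hw (Or.inl h)
    have hwu : G.ReachableOutside B u w := by
      by_contra h
      exact hw (Or.inr ⟨h, hwv⟩)
    have haB : a ∈ B := by
      by_contra haB
      exact ha.1 (hwu.tail haw.symm haB)
    exact ha.2 (hB.eq_of_reachableOutside (.refl hu) hwu hv haB huv haw.symm).symm
  obtain ⟨N, hN⟩ := hR.exists_forall_forcedWithin
  obtain ⟨M, hM, hMN⟩ := exists_isSpine_forcedWithin hvA hAR hA N
  have hcov : ∀ a ∈ A, a ∈ M := fun a ha => (hMN a ha).mp (hN a)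
  obtain ⟨b, hb, hbv⟩ := hBnt.exists_ne v
  refine ⟨v, A, hM.isPendantPath hcov hvA hA ⟨b, (hBA hb).resolve_left hbv⟩,
    Set.union_singleton ▸ hBA, hM.ncard_eq_two hcov hB.1 hBnt hBA⟩

end SimpleGraph

theorem stmt9_general {V : Type} [Fintype V] (G : SimpleGraph V) (B : Set V) (hB : G.IsBlock B)
    (hnce : ¬ ∃ (v : V) (P : Set V), G.IsPendantPath v P ∧ B ⊆ P ∪ {v} ∧ B.ncard = 2) :
    ∀ R : Set V, G.IsConnectedZFS R → G.minDegOn B ≤ (R ∩ B).ncard := by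
  rintro R ⟨hR, hRconn⟩
  rcases B.subsingleton_or_nontrivial with hBs | hBnt
  · simp [SimpleGraph.minDegOn_eq_zero_of_subsingleton hBs]
  by_cases hBR : B ⊆ R
  · obtain ⟨b, hb⟩ := hBnt.nonempty
    rw [Set.inter_eq_right.mpr hBR]
    exact (SimpleGraph.minDegOn_le hb).trans (Set.ncard_le_ncard Set.inter_subset_right)
  obtain ⟨v, ⟨hvB, hvR⟩, m, hfirst, u, hum, huv, hrest⟩ :=
    hR.exists_first_forced Set.disjoint_sdiff_left (Set.nonempty_of_not_subset hBR)
  have hBm : ∀ w ∈ B, G.ForcedWithin R m w → w ∈ R := fun w hw hwm => by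
    by_contra h
    exact hfirst w ⟨hw, h⟩ hwm
  by_cases huB : u ∈ B
  · exact SimpleGraph.minDegOn_le_ncard_inter huB hvB huv (hBm u huB hum) fun w hw huw hwv =>
      hBm w hw (hrest w huw hwv)
  obtain ⟨c, hcR, hcu⟩ : ∃ c ∈ R, G.ReachableOutside B u c := by
    by_contra! h
    exact hfirst v ⟨hvB, hvR⟩
      (hB.forcedWithin_of_reachableOutside huB hvB huv (fun c hc hcR => h c hcR hc) hum)
  have hRu : ∀ r ∈ R, G.ReachableOutside B u r := fun r hr =>
    (hB.reachableOutside_or_mem huB hvB huv hRconn hcR hcu hr).resolve_right hvR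
  exact absurd (hB.exists_isPendantPath hR hBnt huB hvB huv hRu) hnce

/-- Every connected forcing set of a connected non-path graph `G` contains at least
`δ(G[B])` vertices of each block `B` which is not a cut edge of a pendant path. -/
theorem stmt9 {V : Type} [Fintype V] (G : SimpleGraph V) (hG : G.Connected)
    (hnpath : ¬ G.IsPathGraphOn Set.univ) (B : Set V) (hB : G.IsBlock B)
    (hnce : ¬ ∃ (v : V) (P : Set V), G.IsPendantPath v P ∧ B ⊆ P ∪ {v} ∧ B.ncard = 2) :
    ∀ R : Set V, G.IsConnectedZFS R → G.minDegOn B ≤ (R ∩ B).ncard :=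
  stmt9_general G B hB hnce
end

section
/- Let G = (V,E) be a graph with a zero forcing set S of size at most k, and let G' be the graph obtained from G by adding a universal vertex v* adjacent to all of V and two new leaves ℓ₁, ℓ₂ adjacent only to v*. Then S ∪ {v*, ℓ₁} is a connected zero forcing set of G' of size at most k + 2. -/
/-- The graph `G'` obtained from `G` by adding a universal vertex `v* = Sum.inr 0`
adjacent to all of `V`, and two leaves `ℓ₁ = Sum.inr 1`, `ℓ₂ = Sum.inr 2` adjacent
only to `v*`. -/
def augGraph {V : Type*} (G : SimpleGraph V) : SimpleGraph (V ⊕ Fin 3) :=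
  SimpleGraph.fromRel (fun a b =>
    match a, b with
    | Sum.inl u, Sum.inl w => G.Adj u w
    | Sum.inl _, Sum.inr i => i = 0
    | Sum.inr i, Sum.inl _ => i = 0
    | Sum.inr i, Sum.inr j => i = 0 ∨ j = 0)


/-! The copy of `V` sits in `G'` as an induced subgraph, so every force of `G` is still a force
in `G'`: the only new neighbor of a vertex of `V` is `v*`, which is colored from the start.
Once `V` is colored, `v*` has `ℓ₂` as its only uncolored neighbor and forces it. The set is
connected because `v*` is adjacent to all its other members. -/

namespace SimpleGraph

variable {V W : Type*}

lemma Forced.map {G : SimpleGraph V} {H : SimpleGraph W} (f : G ↪g H) {S : Set V} {T : Set W}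
    (hST : f '' S ⊆ T) (hout : ∀ u w, H.Adj (f u) w → w ∉ Set.range f → w ∈ T) {v : V}
    (hv : G.Forced S v) : H.Forced T (f v) := by
  induction hv with
  | init v hv => exact .init _ (hST ⟨v, hv, rfl⟩)
  | force u v _ huv _ ihu ihrest =>
    refine .force (f u) (f v) ihu (f.map_adj_iff.2 huv) fun w huw hwv => ?_
    by_cases hw : w ∈ Set.range f
    · obtain ⟨w, rfl⟩ := hw
      exact ihrest w (f.map_adj_iff.1 huw) (fun h => hwv (congrArg f h))
    · exact .init _ (hout u w huw hw)

lemma induce_connected_of_forall_adj {G : SimpleGraph V} {s : Set V} {c : V} (hc : c ∈ s)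
    (h : ∀ v ∈ s, v ≠ c → G.Adj c v) : (G.induce s).Connected := by
  rw [connected_iff_exists_forall_reachable]
  refine ⟨⟨c, hc⟩, fun ⟨v, hv⟩ => ?_⟩
  by_cases hvc : v = c
  · subst hvc
    rfl
  · exact Adj.reachable (G := G.induce s) (h v hv hvc)

end SimpleGraph

namespace augGraph

variable {V : Type*} (G : SimpleGraph V)

@[simp]
lemma adj_inl_inl (u w : V) : (augGraph G).Adj (.inl u) (.inl w) ↔ G.Adj u w := by
  simp only [augGraph, SimpleGraph.fromRel_adj, ne_eq, Sum.inl.injEq]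
  exact ⟨fun h => h.2.elim id .symm, fun h => ⟨h.ne, .inl h⟩⟩

@[simp]
lemma adj_inl_inr (u : V) (i : Fin 3) : (augGraph G).Adj (.inl u) (.inr i) ↔ i = 0 := by
  simp [augGraph]

@[simp]
lemma adj_inr_inl (i : Fin 3) (u : V) : (augGraph G).Adj (.inr i) (.inl u) ↔ i = 0 := by
  simp [augGraph]

@[simp]
lemma adj_inr_inr (i j : Fin 3) :
    (augGraph G).Adj (.inr i) (.inr j) ↔ i ≠ j ∧ (i = 0 ∨ j = 0) := by
  simp only [augGraph, SimpleGraph.fromRel_adj, ne_eq, Sum.inr.injEq]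
  exact and_congr_right fun _ => ⟨fun h => h.elim id Or.symm, .inl⟩

def inlEmbedding : G ↪g augGraph G where
  toFun := Sum.inl
  inj' := Sum.inl_injective
  map_rel_iff' := adj_inl_inl G _ _

end augGraph

theorem stmt12_general {V : Type} (G : SimpleGraph V) (k : ℕ)
    (S : Set V) (hS : G.IsZeroForcingSet S) (hk : S.ncard ≤ k) :
    (augGraph G).IsConnectedZFS
        (Sum.inl '' S ∪ {Sum.inr 0, Sum.inr 1}) ∧
      (Sum.inl '' S ∪ {Sum.inr 0, Sum.inr 1} : Set (V ⊕ Fin 3)).ncard ≤ k + 2 := by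
  set T : Set (V ⊕ Fin 3) := Sum.inl '' S ∪ {Sum.inr 0, Sum.inr 1}
  have hub : Sum.inr 0 ∈ T := by simp [T]
  have hV (v : V) : (augGraph G).Forced T (.inl v) :=
    (hS v).map (augGraph.inlEmbedding G) Set.subset_union_left <| by
      rintro u (w | i) huw hw
      · exact absurd ⟨w, rfl⟩ hw
      · obtain rfl : i = 0 := (augGraph.adj_inl_inr G u i).1 huw
        exact hub
  have hℓ₂ : (augGraph G).Forced T (.inr 2) :=
    .force _ _ (.init _ hub) (by simp) fun
      | .inl w, _, _ => hV w
      | .inr j, _, _ => .init _ (by fin_cases j <;> simp_all [T])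
  refine ⟨⟨?_, SimpleGraph.induce_connected_of_forall_adj hub ?_⟩, ?_⟩
  · rintro (v | i)
    · exact hV v
    · fin_cases i
      exacts [.init _ hub, .init _ (by simp [T]), hℓ₂]
  · rintro (v | i) hv hne
    · simp
    · fin_cases i <;> simp_all [T]
  · calc T.ncard ≤ (Sum.inl '' S : Set (V ⊕ Fin 3)).ncard + 2 :=
          (Set.ncard_union_le _ _).trans (by gcongr; exact Set.ncard_pair (by simp) |>.le)
      _ ≤ k + 2 := by rw [Set.ncard_image_of_injective _ Sum.inl_injective]; omega

/-- If `S` is a zero forcing set of `G` of size at most `k`, then `S ∪ {v*, ℓ₁}` is a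
connected zero forcing set of `G'` of size at most `k + 2`. -/
theorem stmt12 {V : Type} [Fintype V] (G : SimpleGraph V) (k : ℕ)
    (S : Set V) (hS : G.IsZeroForcingSet S) (hk : S.ncard ≤ k) :
    (augGraph G).IsConnectedZFS
        (Sum.inl '' S ∪ {Sum.inr 0, Sum.inr 1}) ∧
      (Sum.inl '' S ∪ {Sum.inr 0, Sum.inr 1} : Set (V ⊕ Fin 3)).ncard ≤ k + 2 :=
  stmt12_general G k S hS hk
end

section
/- Let G = (V,E) be a graph and G' the graph obtained from G by adding a universal vertex v* adjacent to all of V and two leaves ℓ₁, ℓ₂ adjacent only to v*. If G' has a connected zero forcing set of size at most k + 2, then G has a zero forcing set of size at most k. -/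
/-!
Among the vertices of `G'` whose only neighbor is `v*` (the two leaves and the isolated
vertices of `G`), at most one can lie outside a zero forcing set: two such uncolored twins
could only be forced by `v*`, which never sees exactly one of them uncolored. In particular a
leaf lies in the connected zero forcing set `S'`, and `S'` then contains `v*` unless it is that
leaf alone. Adding all these pendant vertices to `S'` costs at most one vertex, and restricting
to `V` gives a zero forcing set of `G`: a force of `v*` onto a vertex `t` of `G` happens when all
other vertices of `G` are colored, so `t` is forced in `G` by any neighbor, or is isolated and
already colored. Counting `v*` and both leaves, at most `k` vertices of `V` remain.
-/

open Set Sum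

namespace SimpleGraph

variable {W : Type*} {H : SimpleGraph W}

def IsForceClosed (H : SimpleGraph W) (P : Set W) : Prop :=
  ∀ u v, u ∈ P → H.Adj u v → (∀ w, H.Adj u w → w ≠ v → w ∈ P) → v ∈ P

theorem Forced.mem_of_isForceClosed {S P : Set W} {v : W} (hP : H.IsForceClosed P)
    (hSP : S ⊆ P) (hv : H.Forced S v) : v ∈ P := by
  induction hv with
  | init v hv => exact hSP hv
  | force u v _ huv _ hu hrest => exact hP u v hu huv hrest

theorem IsZeroForcingSet.mem_or_mem_of_neighborSet_eq {S : Set W} {x y z : W}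
    (hS : H.IsZeroForcingSet S) (hxy : x ≠ y) (hx : H.neighborSet x = {z})
    (hy : H.neighborSet y = {z}) : x ∈ S ∨ y ∈ S := by
  by_contra! hxyS
  have hadj : ∀ {a u}, H.neighborSet a = {z} → (H.Adj a u ↔ u = z) := fun ha => by
    rw [← mem_neighborSet, ha, mem_singleton_iff]
  have hclosed : H.IsForceClosed {x, y}ᶜ := by
    rintro u v hu huv hrest (rfl | rfl)
    · obtain rfl := (hadj hx).1 huv.symm
      exact hrest y ((hadj hy).2 rfl).symm hxy.symm (by simp)
    · obtain rfl := (hadj hy).1 huv.symm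
      exact hrest x ((hadj hx).2 rfl).symm hxy (by simp)
  have hSsub : S ⊆ {x, y}ᶜ := by
    rintro w hw (rfl | rfl)
    exacts [hxyS.1 hw, hxyS.2 hw]
  exact (hS x).mem_of_isForceClosed hclosed hSsub (by simp)

theorem IsZeroForcingSet.subsingleton_setOf_neighborSet_eq_diff {S : Set W}
    (hS : H.IsZeroForcingSet S) (z : W) : ({x | H.neighborSet x = {z}} \ S).Subsingleton := by
  rintro x ⟨hx, hxS⟩ y ⟨hy, hyS⟩
  by_contra hxy
  exact (hS.mem_or_mem_of_neighborSet_eq hxy hx hy).elim hxS hyS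

theorem eq_singleton_of_induce_connected {S : Set W} {x : W} (hS : (H.induce S).Connected)
    (hx : x ∈ S) (hxS : Disjoint (H.neighborSet x) S) : S = {x} := by
  refine eq_singleton_iff_unique_mem.2 ⟨hx, fun y hy => ?_⟩
  by_contra hyx
  have : Nontrivial S := nontrivial_coe_sort.2 ⟨x, hx, y, hy, Ne.symm hyx⟩
  obtain ⟨u, hu⟩ := hS.preconnected.exists_adj_of_nontrivial ⟨x, hx⟩
  exact hxS.notMem_of_mem_left (show H.Adj x u from hu) u.2

end SimpleGraph

theorem Set.ncard_eq_ncard_preimage_inl_add_ncard_preimage_inr {α β : Type*} [Finite α]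
    [Finite β] (s : Set (α ⊕ β)) : s.ncard = (inl ⁻¹' s).ncard + (inr ⁻¹' s).ncard := by
  have hs : s = inl '' (inl ⁻¹' s) ∪ inr '' (inr ⁻¹' s) := by
    ext x
    cases x <;> simp
  conv_lhs => rw [hs]
  rw [ncard_union_eq disjoint_image_inl_image_inr, ncard_image_of_injective _ inl_injective,
    ncard_image_of_injective _ inr_injective]

section augGraph

variable {V : Type*} {G : SimpleGraph V} {u w : V} {i j : Fin 3}

@[simp]
theorem augGraph_adj_inl_inl : (augGraph G).Adj (inl u) (inl w) ↔ G.Adj u w := by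
  simpa [augGraph, G.adj_comm w u] using fun h => h.ne

@[simp]
theorem augGraph_adj_inl_inr : (augGraph G).Adj (inl u) (inr i) ↔ i = 0 := by
  simp [augGraph]

@[simp]
theorem augGraph_adj_inr_inl : (augGraph G).Adj (inr i) (inl u) ↔ i = 0 := by
  simp [augGraph]

@[simp]
theorem augGraph_adj_inr_inr : (augGraph G).Adj (inr i) (inr j) ↔ i ≠ j ∧ (i = 0 ∨ j = 0) := by
  simp [augGraph, or_comm]

theorem augGraph_neighborSet_inr_of_ne_zero (hj : j ≠ 0) :
    (augGraph G).neighborSet (inr j) = {inr 0} := by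
  ext (u | i) <;> simp [hj]
  rintro rfl
  exact hj

theorem augGraph_neighborSet_inl_of_isIsolated (hu : G.IsIsolated u) :
    (augGraph G).neighborSet (inl u) = {inr 0} := by
  ext (w | i) <;> simp [hu _]

theorem isZeroForcingSet_of_augGraph {S' : Set (V ⊕ Fin 3)} {T : Set V}
    (hS' : (augGraph G).IsZeroForcingSet S') (hT : inl ⁻¹' S' ⊆ T)
    (hiso : ∀ u, G.IsIsolated u → u ∈ T) : G.IsZeroForcingSet T := by
  have hclosed : (augGraph G).IsForceClosed {x | ∀ u, x = inl u → G.Forced T u} := by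
    rintro (w | i) v hw hwv hrest t rfl
    · exact .force w t (hw w rfl) (augGraph_adj_inl_inl.1 hwv) fun s hs hst =>
        hrest (inl s) (augGraph_adj_inl_inl.2 hs) (by simpa using hst) s rfl
    · obtain rfl : i = 0 := augGraph_adj_inr_inl.1 hwv
      -- `v*` only forces `t` once all other vertices of `G` are colored.
      have hothers : ∀ s, s ≠ t → G.Forced T s := fun s hst =>
        hrest (inl s) (augGraph_adj_inr_inl.2 rfl) (by simpa using hst) s rfl
      by_cases ht : G.IsIsolated t
      · exact .init t (hiso t ht)
      · obtain ⟨w, htw⟩ := G.exists_adj_iff_not_isIsolated.2 ht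
        exact .force w t (hothers w htw.ne') htw.symm fun s _ hst => hothers s hst
  have hS'T : S' ⊆ {x | ∀ u, x = inl u → G.Forced T u} := by
    rintro x hx t rfl
    exact .init t (hT hx)
  exact fun u => (hS' (inl u)).mem_of_isForceClosed hclosed hS'T u rfl

theorem exists_leaf_mem_of_isZeroForcingSet {S' : Set (V ⊕ Fin 3)}
    (hS' : (augGraph G).IsZeroForcingSet S') : ∃ j, j ≠ 0 ∧ inr j ∈ S' := by
  obtain h | h := hS'.mem_or_mem_of_neighborSet_eq (by simp)
    (augGraph_neighborSet_inr_of_ne_zero (G := G) (j := 1) (by decide))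
    (augGraph_neighborSet_inr_of_ne_zero (j := 2) (by decide))
  exacts [⟨1, by decide, h⟩, ⟨2, by decide, h⟩]

theorem ncard_le_one_of_isConnectedZFS_of_inr_zero_notMem {S' : Set (V ⊕ Fin 3)}
    (hS' : (augGraph G).IsConnectedZFS S') (h0 : inr 0 ∉ S') : S'.ncard ≤ 1 := by
  obtain ⟨j, hj, hjS'⟩ := exists_leaf_mem_of_isZeroForcingSet hS'.1
  have hdisj : Disjoint ((augGraph G).neighborSet (inr j)) S' := by
    simpa [augGraph_neighborSet_inr_of_ne_zero hj] using h0
  simp [SimpleGraph.eq_singleton_of_induce_connected hS'.2 hjS' hdisj]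

end augGraph

/-- If `G'` has a connected zero forcing set of size at most `k + 2`, then `G` has a
zero forcing set of size at most `k`. -/
theorem stmt13 {V : Type} [Fintype V] (G : SimpleGraph V) (k : ℕ)
    (h : ∃ S' : Set (V ⊕ Fin 3), (augGraph G).IsConnectedZFS S' ∧ S'.ncard ≤ k + 2) :
    ∃ S : Set V, G.IsZeroForcingSet S ∧ S.ncard ≤ k := by
  obtain ⟨S', hS', hcard⟩ := h
  set P := {x | (augGraph G).neighborSet x = {inr 0}}
  have hleaf : ∀ j : Fin 3, j ≠ 0 → inr j ∈ P := fun _ hj =>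
    augGraph_neighborSet_inr_of_ne_zero hj
  refine ⟨inl ⁻¹' (S' ∪ P), isZeroForcingSet_of_augGraph hS'.1
    (preimage_mono subset_union_left)
    fun u hu => Or.inr (augGraph_neighborSet_inl_of_isIsolated hu), ?_⟩
  have hunion : (S' ∪ P).ncard ≤ S'.ncard + 1 := by
    rw [← union_sdiff_self]
    exact (ncard_union_le _ _).trans <| Nat.add_le_add_left
      (ncard_le_one_iff_subsingleton.2 (hS'.1.subsingleton_setOf_neighborSet_eq_diff _)) _
  have hsplit := ncard_eq_ncard_preimage_inl_add_ncard_preimage_inr (S' ∪ P)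
  by_cases h0 : inr 0 ∈ S'
  · have hinr : inr ⁻¹' (S' ∪ P) = univ := eq_univ_of_forall fun j => by
      by_cases hj : j = 0
      exacts [Or.inl (hj ▸ h0), Or.inr (hleaf j hj)]
    rw [hinr, ncard_univ, Nat.card_fin] at hsplit
    omega
  · have hleaves : ({1, 2} : Set (Fin 3)).ncard ≤ (inr ⁻¹' (S' ∪ P)).ncard :=
      ncard_le_ncard (by rintro j (rfl | rfl) <;> exact Or.inr (hleaf _ (by decide)))
    rw [ncard_pair (by decide)] at hleaves
    have := ncard_le_one_of_isConnectedZFS_of_inr_zero_notMem hS' h0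
    omega
end

section
/- Let G be a connected graph and C the vertex set of a block of G such that G[C] is a cycle. Then for any connected zero forcing set R of G, the set C \ R of cycle vertices excluded from R forms a single (possibly empty) segment, i.e., the excluded vertices are consecutive along the cycle. -/
/-!
Maximality of a block `C` forbids ears: a path outside `C` joining neighbours of two distinct
vertices of `C` would enlarge `C` to a bigger biconnected set. Hence a connected forcing set `R`
meets `C` (otherwise forcing never leaves the component of `G - C` containing `R` together with
its at most one attachment vertex), and a walk inside `R` between two vertices of `C` can be
shortcut to one inside `C ∩ R`, so `C ∩ R` is connected. Finally, in a cycle the complement of a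
nonempty connected proper vertex set is connected: by edge counting a connected set sends at most
two edges out, while each part of a disconnected complement would receive at least two, cuts of a
2-regular graph being even.
-/

namespace SimpleGraph

variable {V : Type*} {G : SimpleGraph V}

def ReachableWithin (G : SimpleGraph V) (s : Set V) (a b : V) : Prop :=
  ∃ p : G.Walk a b, ∀ x ∈ p.support, x ∈ s

namespace ReachableWithin

variable {s t : Set V} {a b c : V}

lemma refl (ha : a ∈ s) : G.ReachableWithin s a a :=
  ⟨.nil, by simpa using ha⟩

lemma symm (h : G.ReachableWithin s a b) : G.ReachableWithin s b a := by
  obtain ⟨p, hp⟩ := h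
  exact ⟨p.reverse, by simpa using hp⟩

lemma trans (h : G.ReachableWithin s a b) (h' : G.ReachableWithin s b c) :
    G.ReachableWithin s a c := by
  obtain ⟨p, hp⟩ := h
  obtain ⟨q, hq⟩ := h'
  refine ⟨p.append q, fun x hx => ?_⟩
  rw [Walk.mem_support_append_iff] at hx
  exact hx.elim (hp x) (hq x)

lemma mono (hst : s ⊆ t) (h : G.ReachableWithin s a b) : G.ReachableWithin t a b := by
  obtain ⟨p, hp⟩ := h
  exact ⟨p, fun x hx => hst (hp x hx)⟩

lemma left_mem (h : G.ReachableWithin s a b) : a ∈ s := by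
  obtain ⟨p, hp⟩ := h
  exact hp a p.start_mem_support

lemma right_mem (h : G.ReachableWithin s a b) : b ∈ s :=
  h.symm.left_mem

lemma of_adj (hab : G.Adj a b) (ha : a ∈ s) (hb : b ∈ s) : G.ReachableWithin s a b :=
  ⟨.cons hab .nil, by simp [ha, hb]⟩

end ReachableWithin

lemma connected_induce_iff_reachableWithin {s : Set V} :
    (G.induce s).Connected ↔ s.Nonempty ∧ ∀ a ∈ s, ∀ b ∈ s, G.ReachableWithin s a b := by
  constructor
  · intro h
    refine ⟨Set.nonempty_coe_sort.1 h.nonempty, fun a ha b hb => ?_⟩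
    obtain ⟨q⟩ := h.preconnected ⟨a, ha⟩ ⟨b, hb⟩
    refine ⟨q.map (Embedding.induce s).toHom, fun x hx => ?_⟩
    erw [Walk.support_map, List.mem_map] at hx
    obtain ⟨y, -, rfl⟩ := hx
    exact y.2
  · rintro ⟨⟨a, ha⟩, h⟩
    have : Nonempty s := ⟨⟨a, ha⟩⟩
    refine ⟨fun x y => ?_⟩
    obtain ⟨p, hp⟩ := h x x.2 y y.2
    exact ⟨p.induce s hp⟩

lemma connected_induce_of_reachableWithin {s : Set V} {a : V} (ha : a ∈ s)
    (h : ∀ x ∈ s, G.ReachableWithin s x a) : (G.induce s).Connected :=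
  connected_induce_iff_reachableWithin.2
    ⟨⟨a, ha⟩, fun x hx y hy => (h x hx).trans (h y hy).symm⟩

lemma Walk.IsPath.reachableWithin_start_or_end {u w v x : V} {p : G.Walk u w} (hp : p.IsPath)
    (hv : v ∈ p.support) (hx : x ∈ p.support) (hxv : x ≠ v) :
    G.ReachableWithin ({y | y ∈ p.support} \ {v}) u x ∨
      G.ReachableWithin ({y | y ∈ p.support} \ {v}) w x := by
  classical
  have hx' : x ∈ (p.takeUntil v hv).support ∨ x ∈ (p.dropUntil v hv).support := by
    rw [← Walk.mem_support_append_iff, p.take_spec hv]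
    exact hx
  rcases hx' with hq | hr
  · refine .inl ⟨(p.takeUntil v hv).takeUntil x hq, fun y hy =>
      ⟨p.support_takeUntil_subset_support hv (Walk.support_takeUntil_subset_support _ hq hy), ?_⟩⟩
    rintro rfl
    exact Walk.endpoint_notMem_support_takeUntil (hp.takeUntil hv) hq hxv.symm hy
  · have hr' : x ∈ (p.dropUntil v hv).reverse.support := by simpa using hr
    refine .inr ⟨(p.dropUntil v hv).reverse.takeUntil x hr', fun y hy => ⟨?_, ?_⟩⟩
    · have := Walk.support_takeUntil_subset_support _ hr' hy
      rw [Walk.support_reverse, List.mem_reverse] at this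
      exact p.support_dropUntil_subset_support hv this
    · rintro rfl
      exact Walk.endpoint_notMem_support_takeUntil (hp.dropUntil hv).reverse hr' hxv.symm hy

variable {C R : Set V}

/-- Otherwise `C` together with a path from `u` to `w` would be a larger biconnected set. -/
theorem IsBlock.eq_of_adj_of_reachableWithin_compl (hB : G.IsBlock C) {a c u w : V}
    (ha : a ∈ C) (hc : c ∈ C) (hau : G.Adj a u) (hcw : G.Adj c w)
    (huw : G.ReachableWithin Cᶜ u w) : a = c := by
  classical
  by_contra hac
  obtain ⟨p₀, hp₀⟩ := huw
  set p := p₀.bypass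
  set P : Set V := {x | x ∈ p.support}
  have hPC : ∀ x ∈ P, x ∉ C := fun x hx => hp₀ x (p₀.support_bypass_subset_support hx)
  have hP : (G.induce P).Preconnected := p.connected_induce_support.preconnected
  suffices hbic : G.IsBiconnectedSet (C ∪ P) from
    hPC u p.start_mem_support (hB.2 _ Set.subset_union_left hbic ▸ Or.inr p.start_mem_support)
  refine ⟨connected_induce_union hB.1.1.preconnected hP ha p.start_mem_support hau,
    fun v hv _ => ?_⟩
  by_cases hvC : v ∈ C
  · rw [Set.union_sdiff_distrib, Set.sdiff_singleton_eq_self fun hvP => hPC v hvP hvC]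
    by_cases hav : a = v
    · subst hav
      have hcv : c ∈ C \ {a} := ⟨hc, Ne.symm hac⟩
      exact connected_induce_union (hB.1.2 a hvC ⟨c, hcv⟩).preconnected hP hcv
        p.end_mem_support hcw
    · have hav' : a ∈ C \ {v} := ⟨ha, hav⟩
      exact connected_induce_union (hB.1.2 v hvC ⟨a, hav'⟩).preconnected hP hav'
        p.start_mem_support hau
  · -- `v` lies on the ear, and every other ear vertex still reaches one of its two ends
    have hsub : C ⊆ (C ∪ P) \ {v} := fun x hx => ⟨.inl hx, fun h => hvC (h ▸ hx)⟩
    have hCa : ∀ x ∈ C, G.ReachableWithin ((C ∪ P) \ {v}) x a := fun x hx =>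
      ((connected_induce_iff_reachableWithin.1 hB.1.1).2 x hx a ha).mono hsub
    have hPsub : P \ {v} ⊆ (C ∪ P) \ {v} := Set.sdiff_subset_sdiff_left Set.subset_union_right
    refine connected_induce_of_reachableWithin (hsub ha) fun x ⟨hx, hxv⟩ => ?_
    rcases hx with hx | hx
    · exact hCa x hx
    rcases p₀.bypass_isPath.reachableWithin_start_or_end (hv.resolve_left hvC) hx hxv with h | h
    · exact (h.symm.mono hPsub).trans
        (.of_adj hau.symm (hPsub h.left_mem) (hsub ha))
    · exact (h.symm.mono hPsub).trans
        ((ReachableWithin.of_adj hcw.symm (hPsub h.left_mem) (hsub hc)).trans (hCa c hc))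

/-- A walk inside `R` that ends on the block `C` can be pushed into `C ∩ R`: every excursion
of the walk out of `C` returns to the vertex where it left. -/
theorem IsBlock.reachableWithin_inter_of_walk (hB : G.IsBlock C) {x b : V} (p : G.Walk x b)
    (hp : ∀ y ∈ p.support, y ∈ R) (hb : b ∈ C) {a : V} (ha : a ∈ C ∩ R)
    (hax : a = x ∨ ∃ u, G.Adj a u ∧ G.ReachableWithin Cᶜ u x) :
    G.ReachableWithin (C ∩ R) a b := by
  induction p generalizing a with
  | nil =>
    rcases hax with rfl | ⟨u, -, hu⟩
    · exact .refl ha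
    · exact absurd hb hu.right_mem
  | @cons x y b hxy p ih =>
    have hpR : ∀ z ∈ p.support, z ∈ R := fun z hz => hp z (by simp [hz])
    by_cases hy : y ∈ C
    · have hyR : y ∈ C ∩ R := ⟨hy, hpR y p.start_mem_support⟩
      rcases hax with rfl | ⟨u, hau, hux⟩
      · exact (ReachableWithin.of_adj hxy ha hyR).trans (ih hpR hb hyR (.inl rfl))
      · obtain rfl := hB.eq_of_adj_of_reachableWithin_compl ha.1 hy hau hxy.symm hux
        exact ih hpR hb ha (.inl rfl)
    · refine ih hpR hb ha (.inr ?_)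
      rcases hax with rfl | ⟨u, hau, hux⟩
      · exact ⟨y, hxy, .refl hy⟩
      · exact ⟨u, hau, hux.trans (.of_adj hxy hux.right_mem hy)⟩

theorem IsBlock.connected_induce_inter (hB : G.IsBlock C) (hR : (G.induce R).Connected)
    (hCR : (C ∩ R).Nonempty) : (G.induce (C ∩ R)).Connected := by
  refine connected_induce_iff_reachableWithin.2 ⟨hCR, fun a ha b hb => ?_⟩
  obtain ⟨p, hp⟩ := (connected_induce_iff_reachableWithin.1 hR).2 a ha.2 b hb.2
  exact hB.reachableWithin_inter_of_walk p hp hb.1 ha (.inl rfl)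

/-- If a connected set `R` missed the block `C`, it would lie in one component `K` of `G - C`,
which is attached to `C` at no more than one vertex `N`; forcing then never leaves `K ∪ N`. -/
theorem IsBlock.inter_nonempty_of_isConnectedZFS (hB : G.IsBlock C) (hC : C.Nonempty)
    (hdeg : ∀ v ∈ C, (G.neighborSet v ∩ C).Nontrivial) (hR : G.IsConnectedZFS R) :
    (C ∩ R).Nonempty := by
  by_contra hCR
  obtain ⟨⟨r, hr⟩⟩ := hR.2.nonempty
  have hRC : R ⊆ Cᶜ := fun x hxR hxC => hCR ⟨x, hxC, hxR⟩
  set K : Set V := {x | G.ReachableWithin Cᶜ r x}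
  set N : Set V := {c ∈ C | ∃ k ∈ K, G.Adj k c}
  have hKC : ∀ k ∈ K, k ∉ C := fun k hk => hk.right_mem
  have hN : N.Subsingleton := by
    rintro c₁ ⟨hc₁, k₁, hk₁, hkc₁⟩ c₂ ⟨hc₂, k₂, hk₂, hkc₂⟩
    exact hB.eq_of_adj_of_reachableWithin_compl hc₁ hc₂ hkc₁.symm hkc₂.symm (hk₁.symm.trans hk₂)
  have hforced : ∀ v, G.Forced R v → v ∈ K ∨ v ∈ N := by
    intro v hv
    induction hv with
    | init v hv =>
      exact .inl (((connected_induce_iff_reachableWithin.1 hR.2).2 r hr v hv).mono hRC)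
    | force u v _ huv _ ihu ihrest =>
      rcases ihu with huK | huN
      · by_cases hvC : v ∈ C
        · exact .inr ⟨hvC, u, huK, huv⟩
        · exact .inl (huK.trans (.of_adj huv (hKC u huK) hvC))
      · obtain ⟨c, ⟨huc, hc⟩, hcv⟩ := (hdeg u huN.1).exists_ne v
        rcases ihrest c huc hcv with hcK | hcN
        · exact absurd hc (hKC c hcK)
        · exact absurd (hN hcN huN ▸ huc) G.irrefl
  obtain ⟨c, hc, hcN⟩ : ∃ c ∈ C, c ∉ N := by
    by_contra! h
    obtain ⟨v, hv⟩ := hC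
    exact (hdeg v hv).not_subsingleton (hN.anti fun x hx => h x hx.2)
  exact (hforced c (hR.1 c)).elim (fun hcK => hKC c hcK hc) hcN

section Counting

open Finset

variable [DecidableRel G.Adj]

lemma card_interedges_eq_sum (S T : Finset V) :
    #(G.interedges S T) = ∑ v ∈ S, #{w ∈ T | G.Adj v w} := by
  simp only [interedges_def, card_filter, sum_product]

lemma card_interedges_comm (S T : Finset V) :
    #(G.interedges S T) = #(G.interedges T S) :=
  have := G.symm
  Rel.card_interedges_comm S T

lemma card_interedges_self (A : Finset V) :
    #(G.interedges A A) = 2 * Nat.card (G.induce (A : Set V)).edgeSet := by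
  classical
  rw [Nat.card_eq_fintype_card, ← edgeFinset_card, ← dart_card_eq_twice_card_edges,
    ← Fintype.card_coe]
  refine Fintype.card_congr
    { toFun := fun e => ⟨⟨⟨e.1.1, (G.mem_interedges_iff.1 e.2).1⟩,
        ⟨e.1.2, (G.mem_interedges_iff.1 e.2).2.1⟩⟩, (G.mem_interedges_iff.1 e.2).2.2⟩
      invFun := fun d => ⟨(d.fst.1, d.snd.1), G.mem_interedges_iff.2 ⟨d.fst.2, d.snd.2, d.adj⟩⟩
      left_inv := fun _ => rfl
      right_inv := fun _ => rfl }

lemma even_card_interedges_self (A : Finset V) : Even #(G.interedges A A) :=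
  ⟨_, (card_interedges_self A).trans (two_mul _)⟩

lemma two_mul_card_le_card_interedges_self (A : Finset V) (hA : (G.induce (A : Set V)).Connected) :
    2 * #A ≤ #(G.interedges A A) + 2 := by
  have := hA.card_vert_le_card_edgeSet_add_one
  rw [Nat.card_coe_set_eq, Set.ncard_coe_finset] at this
  rw [card_interedges_self]
  omega

variable [DecidableEq V]

lemma card_interedges_union_right (S : Finset V) {T T' : Finset V} (hT : Disjoint T T') :
    #(G.interedges S (T ∪ T')) = #(G.interedges S T) + #(G.interedges S T') := by
  simp only [card_interedges_eq_sum, filter_union, card_union_of_disjoint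
    (disjoint_filter_filter hT), sum_add_distrib]

variable {C : Finset V}

lemma card_interedges_add_card_interedges_sdiff (hdeg : ∀ v ∈ C, #{w ∈ C | G.Adj v w} = 2)
    {S : Finset V} (hSC : S ⊆ C) :
    #(G.interedges S S) + #(G.interedges S (C \ S)) = 2 * #S := by
  rw [← card_interedges_union_right S disjoint_sdiff, union_sdiff_of_subset hSC,
    card_interedges_eq_sum, sum_congr rfl fun v hv => hdeg v (hSC hv), sum_const, smul_eq_mul,
    mul_comm]

lemma interedges_sdiff_nonempty (hC : (G.induce (C : Set V)).Connected) {S : Finset V}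
    (hSC : S ⊆ C) (hS : S.Nonempty) (hCS : (C \ S).Nonempty) :
    (G.interedges S (C \ S)).Nonempty := by
  obtain ⟨s, hs⟩ := hS
  obtain ⟨t, ht⟩ := hCS
  rw [mem_sdiff] at ht
  obtain ⟨p⟩ := hC.preconnected ⟨s, hSC hs⟩ ⟨t, ht.1⟩
  obtain ⟨d, -, hd₁, hd₂⟩ := p.exists_boundary_dart {x | x.1 ∈ S} hs ht.2
  exact ⟨(d.fst.1, d.snd.1), G.mem_interedges_iff.2 ⟨hd₁, mem_sdiff.2 ⟨d.snd.2, hd₂⟩, d.adj⟩⟩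

/-- In a 2-regular graph every cut has even size, so a nonempty cut has at least two edges. -/
lemma two_le_card_interedges_sdiff (hC : (G.induce (C : Set V)).Connected)
    (hdeg : ∀ v ∈ C, #{w ∈ C | G.Adj v w} = 2) {S : Finset V} (hSC : S ⊆ C) (hS : S.Nonempty)
    (hCS : (C \ S).Nonempty) : 2 ≤ #(G.interedges S (C \ S)) := by
  have hpos := (interedges_sdiff_nonempty hC hSC hS hCS).card_pos
  obtain ⟨k, hk⟩ := even_card_interedges_self (G := G) S
  have := card_interedges_add_card_interedges_sdiff hdeg hSC
  omega

lemma card_interedges_sdiff_le_two (hdeg : ∀ v ∈ C, #{w ∈ C | G.Adj v w} = 2) {A : Finset V}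
    (hAC : A ⊆ C) (hA : (G.induce (A : Set V)).Connected) : #(G.interedges A (C \ A)) ≤ 2 := by
  have := two_mul_card_le_card_interedges_self A hA
  have := card_interedges_add_card_interedges_sdiff hdeg hAC
  omega

/-- Otherwise `B` and the rest of `C ∖ A` would each send at least two edges to `A`, while a
connected `A` sends at most two edges out. -/
lemma interedges_sdiff_sdiff_nonempty (hC : (G.induce (C : Set V)).Connected)
    (hdeg : ∀ v ∈ C, #{w ∈ C | G.Adj v w} = 2) {A B : Finset V} (hAC : A ⊆ C)
    (hA : (G.induce (A : Set V)).Connected) (hB : B ⊆ C \ A) (hBne : B.Nonempty)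
    (hB' : ((C \ A) \ B).Nonempty) : (G.interedges B ((C \ A) \ B)).Nonempty := by
  set B' := (C \ A) \ B
  rw [nonempty_iff_ne_empty, ← card_eq_zero.ne]
  intro hBB'
  have hCB : C \ B = A ∪ B' := by grind
  have hCB' : C \ B' = A ∪ B := by grind
  have h : 2 ≤ #(G.interedges B (C \ B)) := two_le_card_interedges_sdiff hC hdeg
    (hB.trans sdiff_subset) hBne (hCB ▸ hB'.mono subset_union_right)
  have h' : 2 ≤ #(G.interedges B' (C \ B')) := two_le_card_interedges_sdiff hC hdeg
    (sdiff_subset.trans sdiff_subset) hB' (hCB' ▸ hBne.mono subset_union_right)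
  have hA₂ := card_interedges_sdiff_le_two hdeg hAC hA
  rw [hCB, card_interedges_union_right _ (disjoint_sdiff.mono_right sdiff_subset), hBB'] at h
  rw [hCB', card_interedges_union_right _ (disjoint_sdiff.mono_right hB),
    card_interedges_comm B' B, hBB'] at h'
  rw [← union_sdiff_of_subset hB, card_interedges_union_right _ disjoint_sdiff,
    card_interedges_comm A B, card_interedges_comm A B'] at hA₂
  omega

theorem connected_induce_sdiff_of_two_regular (hC : (G.induce (C : Set V)).Connected)
    (hdeg : ∀ v ∈ C, #{w ∈ C | G.Adj v w} = 2) {A : Finset V} (hAC : A ⊆ C)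
    (hA : (G.induce (A : Set V)).Connected) (hCA : (C \ A).Nonempty) :
    (G.induce ((C \ A : Finset V) : Set V)).Connected := by
  classical
  refine connected_induce_iff_reachableWithin.2 ⟨by exact_mod_cast hCA, fun x hx y hy => ?_⟩
  by_contra hxy
  set B := {z ∈ C \ A | G.ReachableWithin ↑(C \ A) x z}
  have hB : B ⊆ C \ A := filter_subset _ _
  obtain ⟨e, he⟩ := interedges_sdiff_sdiff_nonempty hC hdeg hAC hA hB
    ⟨x, mem_filter.2 ⟨hx, .refl hx⟩⟩ ⟨y, mem_sdiff.2 ⟨hy, fun h => hxy (mem_filter.1 h).2⟩⟩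
  obtain ⟨he₁, he₂, hadj⟩ := G.mem_interedges_iff.1 he
  obtain ⟨he₂, he₂'⟩ := mem_sdiff.1 he₂
  exact he₂' (mem_filter.2 ⟨he₂, (mem_filter.1 he₁).2.trans (.of_adj hadj (hB he₁) he₂)⟩)

end Counting

namespace IsCycleGraphOn

variable {C : Set V} (hC : G.IsCycleGraphOn C)
include hC

lemma finite : C.Finite :=
  Set.finite_of_ncard_pos (by have := hC.1; omega)

lemma nonempty : C.Nonempty :=
  Set.nonempty_of_ncard_ne_zero (by have := hC.1; omega)

lemma nontrivial_neighborSet_inter {v : V} (hv : v ∈ C) : (G.neighborSet v ∩ C).Nontrivial :=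
  (Set.one_lt_ncard_iff_nontrivial_and_finite.1 (by rw [hC.2.2 v hv]; omega)).1

theorem connected_induce_diff {A : Set V} (hAC : A ⊆ C) (hA : (G.induce A).Connected)
    (hCA : (C \ A).Nonempty) : (G.induce (C \ A)).Connected := by
  classical
  obtain ⟨C, rfl⟩ := hC.finite.exists_finset_coe
  obtain ⟨A, rfl⟩ := (C.finite_toSet.subset hAC).exists_finset_coe
  rw [← Finset.coe_sdiff] at hCA ⊢
  refine connected_induce_sdiff_of_two_regular hC.2.1 (fun v hv => ?_) (by exact_mod_cast hAC) hA
    (by exact_mod_cast hCA)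
  rw [← hC.2.2 v hv, ← Set.ncard_coe_finset, Finset.coe_filter, Set.inter_comm]
  rfl

end IsCycleGraphOn

end SimpleGraph

theorem stmt14_general {V : Type} (G : SimpleGraph V)
    (C : Set V) (hB : G.IsBlock C) (hC : G.IsCycleGraphOn C) :
    ∀ R : Set V, G.IsConnectedZFS R → G.IsSegmentOf C (C \ R) := by
  intro R hR
  have hCR : (C ∩ R).Nonempty :=
    hB.inter_nonempty_of_isConnectedZFS hC.nonempty
      (fun _ => hC.nontrivial_neighborSet_inter) hR
  refine ⟨Set.sdiff_subset, or_iff_not_imp_left.2 fun hCR' => ⟨?_, ?_⟩⟩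
  · rw [← Set.sdiff_self_inter]
    exact hC.connected_induce_diff Set.inter_subset_left (hB.connected_induce_inter hR.2 hCR)
      (by rwa [Set.sdiff_self_inter, Set.nonempty_iff_ne_empty])
  · obtain ⟨c, hcC, hcR⟩ := hCR
    exact fun h => (h.symm ▸ hcC : c ∈ C \ R).2 hcR

/-- For a cycle block `C` of a connected graph `G`, the cycle vertices excluded from a
connected forcing set form a single (possibly empty) segment of the cycle. -/
theorem stmt14 {V : Type} [Fintype V] (G : SimpleGraph V) (hG : G.Connected)
    (C : Set V) (hB : G.IsBlock C) (hC : G.IsCycleGraphOn C) :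
    ∀ R : Set V, G.IsConnectedZFS R → G.IsSegmentOf C (C \ R) :=
  stmt14_general G C hB hC
end
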